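/- arXiv:1207.6501 — 3 statements merged into one kernel-verified Lean document; each statement's English description precedes it below -/
import Mathlib

section
/- The function (ρ, σ) ↦ W_N(ρ, σ)² is jointly convex on P(T_N^d) × P(T_N^d) with respect to linear interpolation: for all probability densities ρ₀, ρ₁, σ₀, σ₁ on T_N^d and all λ ∈ [0,1], W_N((1−λ)ρ₀ + λσ₀, (1−λ)ρ₁ + λσ₁)² ≤ (1−λ) W_N(ρ₀, ρ₁)² + λ W_N(σ₀, σ₁)². -/
open MeasureTheory Filter Set Function
open scoped ENNReal NNReal BigOperators

noncomputable section

namespace GHConv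

/-! ### The discrete torus `T_N^d = (ℤ/Nℤ)^d` -/

/-- The discrete torus. -/
abbrev TN (d N : ℕ) := Fin d → ZMod N

/-- The `i`-th unit vector in the discrete torus. -/
def unitVec (d N : ℕ) (i : Fin d) : TN d N := fun j => if j = i then 1 else 0

/-- A probability density on the discrete torus: a nonnegative function summing to `N^d`. -/
def IsDensity (d N : ℕ) [NeZero N] (ρ : TN d N → ℝ) : Prop :=
  (∀ a, 0 ≤ ρ a) ∧ ∑ a : TN d N, ρ a = (N : ℝ) ^ d

/-- The logarithmic mean `θ(s,t) = ∫₀¹ s^(1-p) t^p dp`, set to `0` if `s = 0` or `t = 0`. -/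
def logMean (s t : ℝ) : ℝ :=
  if 0 < s ∧ 0 < t then ∫ p in (0:ℝ)..1, s ^ (1 - p) * t ^ p else 0

/-- The harmonic mean `θ̃(s,t) = 2st/(s+t)`, set to `0` if `s = 0` or `t = 0`. -/
def harmMean (s t : ℝ) : ℝ :=
  if 0 < s ∧ 0 < t then 2 * s * t / (s + t) else 0

/-- The action `A_N(ρ,V)`, valued in `ℝ≥0∞` (so that an edge of zero density carrying a
nonzero flux has infinite action, while `0/0 = 0`). -/
def actionN (d N : ℕ) [NeZero N] (ρ : TN d N → ℝ) (V : TN d N → Fin d → ℝ) : ℝ≥0∞ :=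
  ENNReal.ofReal (1 / (4 * (d:ℝ)^2 * (N:ℝ)^(d+2))) *
    ∑ a : TN d N, ∑ i : Fin d,
      ENNReal.ofReal ((V a i)^2) / ENNReal.ofReal (logMean (ρ a) (ρ (a + unitVec d N i)))

/-- The action built from the harmonic mean instead of the logarithmic mean. -/
def actionHarmN (d N : ℕ) [NeZero N] (ρ : TN d N → ℝ) (V : TN d N → Fin d → ℝ) : ℝ≥0∞ :=
  ENNReal.ofReal (1 / (4 * (d:ℝ)^2 * (N:ℝ)^(d+2))) *
    ∑ a : TN d N, ∑ i : Fin d,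
      ENNReal.ofReal ((V a i)^2) / ENNReal.ofReal (harmMean (ρ a) (ρ (a + unitVec d N i)))

/-- Solutions of the discrete continuity equation
`dρ_t/dt (a) + (1/(2d)) ∑ᵢ (V_t(a,i) - V_t(a-eᵢ,i)) = 0` on `(0,1)`, distributionally. -/
structure DiscCESol (d N : ℕ) [NeZero N]
    (ρ : ℝ → TN d N → ℝ) (V : ℝ → TN d N → Fin d → ℝ) : Prop where
  density : ∀ t ∈ Icc (0:ℝ) 1, IsDensity d N (ρ t)
  cont : ∀ a, ContinuousOn (fun t => ρ t a) (Icc (0:ℝ) 1)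
  intV : ∀ a i, IntervalIntegrable (fun t => V t a i) volume 0 1
  weak : ∀ a, ∀ φ : ℝ → ℝ, ContDiff ℝ (⊤ : ℕ∞) φ → Function.support φ ⊆ Ioo (0:ℝ) 1 →
    ∫ t in (0:ℝ)..1, ρ t a * deriv φ t =
      ∫ t in (0:ℝ)..1, φ t *
        ((1 / (2 * (d:ℝ))) * ∑ i : Fin d, (V t a i - V t (a - unitVec d N i) i))

/-- The squared discrete transportation distance `W_N²` (logarithmic mean). -/
def WNsq (d N : ℕ) [NeZero N] (ρ0 ρ1 : TN d N → ℝ) : ℝ≥0∞ :=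
  ⨅ p : {p : (ℝ → TN d N → ℝ) × (ℝ → TN d N → Fin d → ℝ) //
      DiscCESol d N p.1 p.2 ∧ p.1 0 = ρ0 ∧ p.1 1 = ρ1},
    ∫⁻ t in Icc (0:ℝ) 1, actionN d N ((p : _ ).1.1 t) ((p : _).1.2 t)

/-- The discrete transportation distance `W_N`. -/
def WN (d N : ℕ) [NeZero N] (ρ0 ρ1 : TN d N → ℝ) : ℝ≥0∞ :=
  (WNsq d N ρ0 ρ1) ^ (1/2 : ℝ)

/-- The squared discrete transportation distance built from the harmonic mean. -/
def WtildeNsq (d N : ℕ) [NeZero N] (ρ0 ρ1 : TN d N → ℝ) : ℝ≥0∞ :=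
  ⨅ p : {p : (ℝ → TN d N → ℝ) × (ℝ → TN d N → Fin d → ℝ) //
      DiscCESol d N p.1 p.2 ∧ p.1 0 = ρ0 ∧ p.1 1 = ρ1},
    ∫⁻ t in Icc (0:ℝ) 1, actionHarmN d N ((p : _).1.1 t) ((p : _).1.2 t)

/-- The discrete transportation distance built from the harmonic mean. -/
def WtildeN (d N : ℕ) [NeZero N] (ρ0 ρ1 : TN d N → ℝ) : ℝ≥0∞ :=
  (WtildeNsq d N ρ0 ρ1) ^ (1/2 : ℝ)

/-- The rescaled metric `d_N(a,b) = (1/N) √(∑ᵢ |aᵢ-bᵢ|²)` on the discrete torus, where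
`|aᵢ-bᵢ|` is the distance in `ℤ/Nℤ`. -/
def dN (d N : ℕ) [NeZero N] (a b : TN d N) : ℝ :=
  (1 / (N:ℝ)) * Real.sqrt (∑ i : Fin d, (((a i - b i).valMinAbs : ℤ) : ℝ)^2)

/-- The regularity class `D_δ(T_N^d)`: densities bounded below by `δ` with Lipschitz
constant (w.r.t. `d_N`) at most `δ⁻¹`. -/
def InDreg (d N : ℕ) [NeZero N] (δ : ℝ) (ρ : TN d N → ℝ) : Prop :=
  IsDensity d N ρ ∧ (∀ a, δ ≤ ρ a) ∧ ∀ a b, |ρ a - ρ b| ≤ δ⁻¹ * dN d N a b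

/-- The squared restricted distance `W_{N,δ}²`, where the interpolating densities are
required to stay in `D_δ(T_N^d)`. -/
def WNdeltaSq (d N : ℕ) [NeZero N] (δ : ℝ) (ρ0 ρ1 : TN d N → ℝ) : ℝ≥0∞ :=
  ⨅ p : {p : (ℝ → TN d N → ℝ) × (ℝ → TN d N → Fin d → ℝ) //
      DiscCESol d N p.1 p.2 ∧ p.1 0 = ρ0 ∧ p.1 1 = ρ1 ∧
        ∀ t ∈ Icc (0:ℝ) 1, InDreg d N δ (p.1 t)},
    ∫⁻ t in Icc (0:ℝ) 1, actionN d N ((p : _).1.1 t) ((p : _).1.2 t)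

/-- The restricted distance `W_{N,δ}`. -/
def WNdelta (d N : ℕ) [NeZero N] (δ : ℝ) (ρ0 ρ1 : TN d N → ℝ) : ℝ≥0∞ :=
  (WNdeltaSq d N δ ρ0 ρ1) ^ (1/2 : ℝ)

/-- Couplings between two discrete densities (w.r.t. the uniform measure `π_N(a) = N^{-d}`). -/
def IsDiscCoupling (d N : ℕ) [NeZero N] (ρ0 ρ1 : TN d N → ℝ)
    (γ : TN d N × TN d N → ℝ) : Prop :=
  (∀ p, 0 ≤ γ p) ∧ (∀ a, ∑ b : TN d N, γ (a, b) = ρ0 a / (N:ℝ)^d) ∧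
    (∀ b, ∑ a : TN d N, γ (a, b) = ρ1 b / (N:ℝ)^d)

/-- The squared `2`-Wasserstein distance on the discrete torus w.r.t. `d_N`. -/
def W2Nsq (d N : ℕ) [NeZero N] (ρ0 ρ1 : TN d N → ℝ) : ℝ≥0∞ :=
  ⨅ γ : {γ : TN d N × TN d N → ℝ // IsDiscCoupling d N ρ0 ρ1 γ},
    ENNReal.ofReal (∑ p : TN d N × TN d N, dN d N p.1 p.2 ^ 2 * (γ : _ → ℝ) p)

/-- The `2`-Wasserstein distance on the discrete torus w.r.t. `d_N`. -/
def W2N (d N : ℕ) [NeZero N] (ρ0 ρ1 : TN d N → ℝ) : ℝ≥0∞ :=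
  (W2Nsq d N ρ0 ρ1) ^ (1/2 : ℝ)

/-! ### Discrete Dirichlet form, Laplacian and heat flow -/

/-- Normalised squared `L²` norm on the discrete torus. -/
def l2NormSq (d N : ℕ) [NeZero N] (f : TN d N → ℝ) : ℝ :=
  (1 / (N:ℝ)^d) * ∑ a : TN d N, (f a)^2

/-- The Dirichlet form `E_N(f,g)`. -/
def dirichletN (d N : ℕ) [NeZero N] (f g : TN d N → ℝ) : ℝ :=
  ((N:ℝ)^2 / (N:ℝ)^d) * ∑ a : TN d N, ∑ i : Fin d,
    (f (a + unitVec d N i) - f a) * (g (a + unitVec d N i) - g a)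

/-- The discrete Laplacian `Δ_N`. -/
def lapN (d N : ℕ) (f : TN d N → ℝ) (a : TN d N) : ℝ :=
  (N:ℝ)^2 * ∑ i : Fin d, (f (a + unitVec d N i) - 2 * f a + f (a - unitVec d N i))

/-- The matrix of the discrete Laplacian `Δ_N`. -/
def lapMat (d N : ℕ) [NeZero N] : Matrix (TN d N) (TN d N) ℝ := fun a b =>
  (N:ℝ)^2 * ∑ i : Fin d,
    ((if b = a + unitVec d N i then (1:ℝ) else 0) + (if b = a - unitVec d N i then 1 else 0)
      - 2 * (if b = a then 1 else 0))

/-- The discrete heat semigroup `H^N_s = exp (s Δ_N)` acting on functions. -/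
def heatN (d N : ℕ) [NeZero N] (s : ℝ) (f : TN d N → ℝ) (a : TN d N) : ℝ :=
  ∑ b : TN d N, NormedSpace.exp (s • lapMat d N) a b * f b

/-- The discrete heat kernel `h^N_s = H^N_s (N^d 𝟙_{0})`. -/
def heatKerN (d N : ℕ) [NeZero N] (s : ℝ) (c : TN d N) : ℝ :=
  heatN d N s (fun b => if b = 0 then (N:ℝ)^d else 0) c

/-- The discrete heat semigroup acting componentwise on discrete vector fields. -/
def heatVecN (d N : ℕ) [NeZero N] (s : ℝ) (V : TN d N → Fin d → ℝ)
    (a : TN d N) (i : Fin d) : ℝ :=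
  (1 / (N:ℝ)^d) * ∑ b : TN d N, heatKerN d N s (a - b) * V b i

/-! ### The continuous torus `T^d = (ℝ/ℤ)^d` -/

instance : Fact ((0:ℝ) < 1) := ⟨one_pos⟩

/-- The continuous torus, as a product of circles `ℝ/ℤ`. Its Haar (Lebesgue) probability
measure is `volume`. -/
abbrev Td (d : ℕ) := Fin d → AddCircle (1 : ℝ)

/-- The canonical representative in `[0,1)` of a point of `ℝ/ℤ`. -/
def torusRep (x : AddCircle (1:ℝ)) : ℝ := (AddCircle.equivIco 1 0 x : ℝ)

/-- The canonical lift of a point of the torus to `ℝ^d` (coordinates in `[0,1)`). -/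
def torusLift (d : ℕ) (x : Td d) : Fin d → ℝ := fun i => torusRep (x i)

/-- The quotient (Euclidean) distance on the torus:
`d(x,y) = √(∑ᵢ dist(xᵢ,yᵢ)²)` where `dist` is the quotient distance on `ℝ/ℤ`. -/
def torusDist (d : ℕ) (x y : Td d) : ℝ :=
  Real.sqrt (∑ i : Fin d, (dist (x i) (y i))^2)

/-- Couplings between two measures. -/
def IsCoupling {X : Type*} [MeasurableSpace X] (μ ν : Measure X) (γ : Measure (X × X)) : Prop :=
  IsProbabilityMeasure γ ∧ γ.map Prod.fst = μ ∧ γ.map Prod.snd = ν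

/-- The squared `2`-Wasserstein distance on the torus. -/
def W2sq (d : ℕ) (μ ν : Measure (Td d)) : ℝ≥0∞ :=
  ⨅ γ : {γ : Measure (Td d × Td d) // IsCoupling μ ν γ},
    ∫⁻ p, ENNReal.ofReal (torusDist d p.1 p.2 ^ 2) ∂(γ : Measure (Td d × Td d))

/-- The `2`-Wasserstein distance on the torus. -/
def W2 (d : ℕ) (μ ν : Measure (Td d)) : ℝ≥0∞ := (W2sq d μ ν) ^ (1/2 : ℝ)

/-! ### Heat kernel and heat semigroup on the torus -/

/-- The heat kernel on the torus, via periodization of the Gauss kernel. -/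
def heatKer (d : ℕ) (s : ℝ) (x : Td d) : ℝ :=
  ∑' k : Fin d → ℤ, (4 * Real.pi * s) ^ (-(d:ℝ)/2) *
    Real.exp (-(∑ i : Fin d, (torusRep (x i) + (k i : ℝ))^2) / (4*s))

/-- The density of `H_s μ` with respect to the Lebesgue probability measure. -/
def heatDensity (d : ℕ) (s : ℝ) (μ : Measure (Td d)) (x : Td d) : ℝ :=
  ∫ y, heatKer d s (x - y) ∂μ

/-- The measure `H_s μ`. -/
def heatMeasure (d : ℕ) (s : ℝ) (μ : Measure (Td d)) : Measure (Td d) :=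
  volume.withDensity fun x => ENNReal.ofReal (heatDensity d s μ x)

/-- The heat semigroup acting on functions. -/
def heatFun (d : ℕ) (s : ℝ) (f : Td d → ℝ) (x : Td d) : ℝ :=
  ∫ y, heatKer d s (x - y) * f y

/-! ### Continuity equations on the torus -/

/-- Test functions for the continuity equation on `(0,1) × T^d`: smooth functions on
`ℝ × ℝ^d`, `ℤ^d`-periodic in space, with support in time contained in `(0,1)`. -/
structure IsTestFun (d : ℕ) (φ : ℝ × (Fin d → ℝ) → ℝ) : Prop where
  smooth : ContDiff ℝ (⊤ : ℕ∞) φ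
  periodic : ∀ t (x : Fin d → ℝ) (k : Fin d → ℤ), φ (t, x + fun i => (k i : ℝ)) = φ (t, x)
  suppt : ∀ x, Function.support (fun t => φ (t, x)) ⊆ Ioo (0:ℝ) 1

/-- Solutions `(μ_t, v_t)` of `∂_t μ_t + ∇·(v_t μ_t) = 0` on the torus, distributionally,
with `μ_t` probability measures and `∫₀¹ ∫ |v_t| dμ_t dt < ∞`. -/
structure MeasureCESol (d : ℕ) (μ : ℝ → Measure (Td d)) (v : ℝ → Td d → Fin d → ℝ) : Prop where
  prob : ∀ t ∈ Icc (0:ℝ) 1, IsProbabilityMeasure (μ t)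
  weakCont : ∀ f : Td d → ℝ, Continuous f → ContinuousOn (fun t => ∫ x, f x ∂(μ t)) (Icc (0:ℝ) 1)
  meas : Measurable (Function.uncurry v)
  intV : ∫⁻ t in Icc (0:ℝ) 1,
      (∫⁻ x, ENNReal.ofReal (Real.sqrt (∑ i : Fin d, (v t x i)^2)) ∂(μ t)) < ⊤
  weak : ∀ φ : ℝ × (Fin d → ℝ) → ℝ, IsTestFun d φ →
    ∫ t in (0:ℝ)..1, ∫ x, (fderiv ℝ φ (t, torusLift d x) (1, 0)
        + ∑ i : Fin d, fderiv ℝ φ (t, torusLift d x) (0, Pi.single i 1) * v t x i) ∂(μ t) = 0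

/-- The kinetic energy `∫₀¹ ∫ |v_t|² dμ_t dt`. -/
def energy (d : ℕ) (μ : ℝ → Measure (Td d)) (v : ℝ → Td d → Fin d → ℝ) : ℝ≥0∞ :=
  ∫⁻ t in Icc (0:ℝ) 1, ∫⁻ x, ENNReal.ofReal (∑ i : Fin d, (v t x i)^2) ∂(μ t)

/-- Solutions `(ρ_t, V_t)` of the continuity equation `∂_t ρ_t + ∇·V_t = 0` on the torus
(densities and momentum fields in `L¹([0,1] × T^d)`, `t ↦ ρ_t π` weakly continuous). -/
structure DensityCESol (d : ℕ) (ρ : ℝ → Td d → ℝ) (V : ℝ → Td d → Fin d → ℝ) : Prop where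
  intRho : Integrable (fun p : ℝ × Td d => ρ p.1 p.2)
    ((volume.restrict (Icc (0:ℝ) 1)).prod volume)
  intV : Integrable (fun p : ℝ × Td d => Real.sqrt (∑ i : Fin d, (V p.1 p.2 i)^2))
    ((volume.restrict (Icc (0:ℝ) 1)).prod volume)
  weakCont : ∀ f : Td d → ℝ, Continuous f →
    ContinuousOn (fun t => ∫ x, f x * ρ t x) (Icc (0:ℝ) 1)
  weak : ∀ φ : ℝ × (Fin d → ℝ) → ℝ, IsTestFun d φ →
    ∫ t in (0:ℝ)..1, ∫ x, (fderiv ℝ φ (t, torusLift d x) (1, 0) * ρ t x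
        + ∑ i : Fin d, fderiv ℝ φ (t, torusLift d x) (0, Pi.single i 1) * V t x i) = 0

/-! ### Projections and extensions between the two tori -/

/-- The half-open cube `Q_a^N ⊆ T^d` associated to `a ∈ T_N^d`. -/
def cubeSet (d N : ℕ) (a : TN d N) : Set (Td d) :=
  {x | ∀ i, torusRep (x i) ∈ Ico (((a i).val : ℝ) / N) ((((a i).val : ℝ) + 1) / N)}

/-- Projection of a (continuous) density: `P_N(ρπ)(a) = N^d ∫_{Q_a^N} ρ dπ`. -/
def PNdens (d N : ℕ) (ρ : Td d → ℝ) (a : TN d N) : ℝ :=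
  (N:ℝ)^d * ∫ x in cubeSet d N a, ρ x

/-- Projection of a measure: `P_N(μ)(a) = N^d μ(Q_a^N)`. -/
def PNmeas (d N : ℕ) (μ : Measure (Td d)) (a : TN d N) : ℝ :=
  (N:ℝ)^d * (μ (cubeSet d N a)).toReal

/-- Parameterization of the facet `R_{a,i+}^N` of the cube `Q_a^N`
(the coordinate `y i` is a dummy variable). -/
def facetPoint (d N : ℕ) (a : TN d N) (i : Fin d) (y : Fin d → ℝ) : Td d :=
  fun j => (((if j = i then ((a i).val : ℝ) + 1 else ((a j).val : ℝ) + y j) / N : ℝ) :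
    AddCircle (1:ℝ))

/-- The unit cube `[0,1)^d ⊆ ℝ^d` of parameters. -/
def unitCube (d : ℕ) : Set (Fin d → ℝ) := Set.univ.pi fun _ => Ico (0:ℝ) 1

/-- Projection of a momentum vector field: `P_N(V)(a,i) = 2dN^d ∫_{R_{a,i+}^N} Vᵢ dH^{d-1}`;
here the surface integral over the flat facet `R_{a,i+}^N` (of side length `1/N`) is written
as `N^{-(d-1)}` times an integral over the parameterizing unit cube. -/
def PNvec (d N : ℕ) (V : Td d → Fin d → ℝ) (a : TN d N) (i : Fin d) : ℝ :=
  2 * (d:ℝ) * (N:ℝ)^d * ((1 / (N:ℝ)^(d-1)) * ∫ y in unitCube d, V (facetPoint d N a i y) i)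

/-- The cell of the discrete torus containing a point `x ∈ T^d`. -/
def discretize (d N : ℕ) (x : Td d) : TN d N :=
  fun i => ((⌊(N:ℝ) * torusRep (x i)⌋ : ℤ) : ZMod N)

/-- Extension of a discrete density to a piecewise constant density on the torus. -/
def QNdens (d N : ℕ) (ρN : TN d N → ℝ) (x : Td d) : ℝ := ρN (discretize d N x)

/-- The probability measure `Q_N(ρ^N) π` on the torus. -/
def QNmeas (d N : ℕ) (ρN : TN d N → ℝ) : Measure (Td d) :=
  volume.withDensity fun x => ENNReal.ofReal (QNdens d N ρN x)

/-- Extension of a discrete momentum vector field to the torus, by linear interpolation. -/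
def QNvec (d N : ℕ) (VN : TN d N → Fin d → ℝ) (x : Td d) (i : Fin d) : ℝ :=
  (1 / (2 * (d:ℝ) * N)) *
    ((1 - (N:ℝ) * torusRep (x i) + ((discretize d N x i).val : ℝ)) *
        VN (discretize d N x - unitVec d N i) i
      + ((N:ℝ) * torusRep (x i) - ((discretize d N x i).val : ℝ)) * VN (discretize d N x) i)

/-! ### Auxiliary lemmas for the convexity of `W_N²` -/

section ConvexityAux

lemma logMean_nonneg (s t : ℝ) : 0 ≤ logMean s t := by
  unfold logMean
  split_ifs with h
  · refine intervalIntegral.integral_nonneg zero_le_one fun p _ => ?_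
    exact mul_nonneg (Real.rpow_nonneg h.1.le _) (Real.rpow_nonneg h.2.le _)
  · exact le_refl 0

lemma continuous_mix {s t : ℝ} (hs : 0 < s) (ht : 0 < t) :
    Continuous fun p : ℝ => s ^ (1 - p) * t ^ p := by
  have h : (fun p : ℝ => s ^ (1 - p) * t ^ p)
      = fun p => Real.exp (Real.log s * (1 - p)) * Real.exp (Real.log t * p) := by
    funext p
    rw [Real.rpow_def_of_pos hs, Real.rpow_def_of_pos ht]
  rw [h]
  exact ((Real.continuous_exp.comp
    (continuous_const.mul (continuous_const.sub continuous_id))).mul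
    (Real.continuous_exp.comp (continuous_const.mul continuous_id)))

lemma intervalIntegrable_mix {s t : ℝ} (hs : 0 < s) (ht : 0 < t) :
    IntervalIntegrable (fun p : ℝ => s ^ (1 - p) * t ^ p) volume 0 1 :=
  (continuous_mix hs ht).intervalIntegrable 0 1

lemma logMean_pos {s t : ℝ} (hs : 0 < s) (ht : 0 < t) : 0 < logMean s t := by
  have hm : 0 < min s t := lt_min hs ht
  have key : min s t ≤ logMean s t := by
    unfold logMean
    rw [if_pos ⟨hs, ht⟩]
    have h1 : (∫ _ in (0:ℝ)..1, min s t) ≤ ∫ p in (0:ℝ)..1, s ^ (1 - p) * t ^ p := by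
      refine intervalIntegral.integral_mono_on zero_le_one intervalIntegrable_const
        (intervalIntegrable_mix hs ht) fun p hp => ?_
      have h2 : min s t = (min s t) ^ (1 - p) * (min s t) ^ p := by
        rw [← Real.rpow_add hm]; simp
      rw [h2]
      exact mul_le_mul (Real.rpow_le_rpow hm.le (min_le_left _ _) (by linarith [hp.2]))
        (Real.rpow_le_rpow hm.le (min_le_right _ _) hp.1) (Real.rpow_nonneg hm.le _)
        (Real.rpow_nonneg hs.le _)
    simpa using h1
  linarith

lemma logMean_mono {s1 t1 s2 t2 : ℝ} (hs : s1 ≤ s2) (ht : t1 ≤ t2) :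
    logMean s1 t1 ≤ logMean s2 t2 := by
  by_cases h : 0 < s1 ∧ 0 < t1
  · have hs2 : 0 < s2 := lt_of_lt_of_le h.1 hs
    have ht2 : 0 < t2 := lt_of_lt_of_le h.2 ht
    unfold logMean
    rw [if_pos h, if_pos ⟨hs2, ht2⟩]
    refine intervalIntegral.integral_mono_on zero_le_one (intervalIntegrable_mix h.1 h.2)
      (intervalIntegrable_mix hs2 ht2) fun p hp => ?_
    exact mul_le_mul (Real.rpow_le_rpow h.1.le hs (by linarith [hp.2]))
      (Real.rpow_le_rpow h.2.le ht hp.1) (Real.rpow_nonneg h.2.le _)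
      (Real.rpow_nonneg hs2.le _)
  · calc logMean s1 t1 = 0 := by unfold logMean; rw [if_neg h]
    _ ≤ logMean s2 t2 := logMean_nonneg _ _

lemma logMean_smul {c s t : ℝ} (hc : 0 ≤ c) (hs : 0 ≤ s) (ht : 0 ≤ t) :
    logMean (c * s) (c * t) = c * logMean s t := by
  by_cases h : 0 < c ∧ 0 < s ∧ 0 < t
  · obtain ⟨hc', hs', ht'⟩ := h
    unfold logMean
    rw [if_pos ⟨mul_pos hc' hs', mul_pos hc' ht'⟩, if_pos ⟨hs', ht'⟩,
      ← intervalIntegral.integral_const_mul]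
    refine intervalIntegral.integral_congr fun p _ => ?_
    rw [Real.mul_rpow hc hs, Real.mul_rpow hc ht]
    have hcc : c ^ (1 - p) * c ^ p = c := by rw [← Real.rpow_add hc']; simp
    calc c ^ (1-p) * s ^ (1-p) * (c ^ p * t ^ p)
        = c ^ (1-p) * c ^ p * (s ^ (1-p) * t ^ p) := by ring
      _ = c * (s ^ (1-p) * t ^ p) := by rw [hcc]
  · have hL : logMean (c * s) (c * t) = 0 := by
      unfold logMean; rw [if_neg]
      rintro ⟨h1, h2⟩
      have hc0 : 0 < c := by
        rcases hc.lt_or_eq with h' | h'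
        · exact h'
        · rw [← h', zero_mul] at h1; exact absurd h1 (lt_irrefl 0)
      have hs0 : 0 < s := by
        rcases hs.lt_or_eq with h' | h'
        · exact h'
        · rw [← h', mul_zero] at h1; exact absurd h1 (lt_irrefl 0)
      have ht0 : 0 < t := by
        rcases ht.lt_or_eq with h' | h'
        · exact h'
        · rw [← h', mul_zero] at h2; exact absurd h2 (lt_irrefl 0)
      exact h ⟨hc0, hs0, ht0⟩
    rw [hL]
    by_cases hc0 : c = 0
    · rw [hc0, zero_mul]
    · have hne : ¬ (0 < s ∧ 0 < t) := fun hh => h ⟨hc.lt_of_ne (Ne.symm hc0), hh.1, hh.2⟩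
      unfold logMean; rw [if_neg hne, mul_zero]

lemma logMean_superadd {s0 t0 s1 t1 : ℝ} (hs0 : 0 < s0) (ht0 : 0 < t0)
    (hs1 : 0 < s1) (ht1 : 0 < t1) :
    logMean s0 t0 + logMean s1 t1 ≤ logMean (s0 + s1) (t0 + t1) := by
  have hS : 0 < s0 + s1 := by linarith
  have hT : 0 < t0 + t1 := by linarith
  unfold logMean
  rw [if_pos ⟨hs0, ht0⟩, if_pos ⟨hs1, ht1⟩, if_pos ⟨hS, hT⟩,
    ← intervalIntegral.integral_add (intervalIntegrable_mix hs0 ht0)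
      (intervalIntegrable_mix hs1 ht1)]
  refine intervalIntegral.integral_mono_on zero_le_one
    ((intervalIntegrable_mix hs0 ht0).add (intervalIntegrable_mix hs1 ht1))
    (intervalIntegrable_mix hS hT) fun p hp => ?_
  have hp1 : 0 ≤ 1 - p := by linarith [hp.2]
  have hp0 : 0 ≤ p := hp.1
  have hST : 0 ≤ (s0+s1) ^ (1-p) * (t0+t1) ^ p :=
    mul_nonneg (Real.rpow_nonneg hS.le _) (Real.rpow_nonneg hT.le _)
  have hSne : ((s0+s1) : ℝ) ^ (1-p) ≠ 0 := (Real.rpow_pos_of_pos hS _).ne'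
  have hTne : ((t0+t1) : ℝ) ^ p ≠ 0 := (Real.rpow_pos_of_pos hT _).ne'
  have key : ∀ s t : ℝ, 0 < s → 0 < t →
      s ^ (1-p) * t ^ p
        = (s/(s0+s1)) ^ (1-p) * (t/(t0+t1)) ^ p * ((s0+s1) ^ (1-p) * (t0+t1) ^ p) := by
    intro s t hs ht
    rw [Real.div_rpow hs.le hS.le, Real.div_rpow ht.le hT.le]
    field_simp
  have g0 : (s0/(s0+s1)) ^ (1-p) * (t0/(t0+t1)) ^ p
      ≤ (1-p) * (s0/(s0+s1)) + p * (t0/(t0+t1)) :=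
    Real.geom_mean_le_arith_mean2_weighted hp1 hp0 (by positivity) (by positivity) (by ring)
  have g1 : (s1/(s0+s1)) ^ (1-p) * (t1/(t0+t1)) ^ p
      ≤ (1-p) * (s1/(s0+s1)) + p * (t1/(t0+t1)) :=
    Real.geom_mean_le_arith_mean2_weighted hp1 hp0 (by positivity) (by positivity) (by ring)
  calc s0 ^ (1-p) * t0 ^ p + s1 ^ (1-p) * t1 ^ p
      = ((s0/(s0+s1)) ^ (1-p) * (t0/(t0+t1)) ^ p
          + (s1/(s0+s1)) ^ (1-p) * (t1/(t0+t1)) ^ p) * ((s0+s1) ^ (1-p) * (t0+t1) ^ p) := by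
        rw [add_mul, ← key s0 t0 hs0 ht0, ← key s1 t1 hs1 ht1]
    _ ≤ (((1-p) * (s0/(s0+s1)) + p * (t0/(t0+t1)))
          + ((1-p) * (s1/(s0+s1)) + p * (t1/(t0+t1)))) * ((s0+s1) ^ (1-p) * (t0+t1) ^ p) :=
        mul_le_mul_of_nonneg_right (add_le_add g0 g1) hST
    _ = 1 * ((s0+s1) ^ (1-p) * (t0+t1) ^ p) := by
        congr 1
        field_simp
        ring
    _ = (s0+s1) ^ (1-p) * (t0+t1) ^ p := one_mul _

lemma logMean_concave {c c' s t s' t' : ℝ} (hc : 0 ≤ c) (hc' : 0 ≤ c')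
    (hs : 0 ≤ s) (ht : 0 ≤ t) (hs' : 0 ≤ s') (ht' : 0 ≤ t') :
    c * logMean s t + c' * logMean s' t' ≤ logMean (c*s + c'*s') (c*t + c'*t') := by
  rw [← logMean_smul hc hs ht, ← logMean_smul hc' hs' ht']
  by_cases h0 : 0 < c*s ∧ 0 < c*t
  · by_cases h1 : 0 < c'*s' ∧ 0 < c'*t'
    · exact logMean_superadd h0.1 h0.2 h1.1 h1.2
    · have hz : logMean (c'*s') (c'*t') = 0 := by unfold logMean; rw [if_neg h1]
      rw [hz, add_zero]
      exact logMean_mono (le_add_of_nonneg_right (by positivity))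
        (le_add_of_nonneg_right (by positivity))
  · have hz : logMean (c*s) (c*t) = 0 := by unfold logMean; rw [if_neg h0]
    rw [hz, zero_add]
    exact logMean_mono (le_add_of_nonneg_left (by positivity))
      (le_add_of_nonneg_left (by positivity))

lemma ofReal_sq_div_logMean_le {c c' x s t s' t' : ℝ} (hc : 0 ≤ c) (hc' : 0 ≤ c')
    (hs : 0 ≤ s) (ht : 0 ≤ t) (hs' : 0 ≤ s') (ht' : 0 ≤ t') (hθ : 0 < logMean s t) :
    ENNReal.ofReal ((c*x)^2) / ENNReal.ofReal (logMean (c*s + c'*s') (c*t + c'*t'))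
      ≤ ENNReal.ofReal c * (ENNReal.ofReal (x^2) / ENNReal.ofReal (logMean s t)) := by
  rcases hc.lt_or_eq with hc0 | hc0
  · have hmono : c * logMean s t ≤ logMean (c*s + c'*s') (c*t + c'*t') := by
      have h := logMean_concave hc hc' hs ht hs' ht'
      nlinarith [mul_nonneg hc' (logMean_nonneg s' t')]
    have hcθ : 0 < c * logMean s t := mul_pos hc0 hθ
    calc ENNReal.ofReal ((c*x)^2) / ENNReal.ofReal (logMean (c*s + c'*s') (c*t + c'*t'))
        ≤ ENNReal.ofReal ((c*x)^2) / ENNReal.ofReal (c * logMean s t) :=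
          ENNReal.div_le_div_left (ENNReal.ofReal_le_ofReal hmono) _
      _ = ENNReal.ofReal c * (ENNReal.ofReal (x^2) / ENNReal.ofReal (logMean s t)) := by
          rw [← ENNReal.ofReal_div_of_pos hcθ, ← ENNReal.ofReal_div_of_pos hθ,
            ← ENNReal.ofReal_mul hc]
          congr 1
          field_simp
  · rw [← hc0]
    simp

lemma logMean_term_top {c x θ : ℝ} (hc : 0 ≤ c) (hcx : c * x ≠ 0) (hθ : ¬ 0 < θ) :
    ENNReal.ofReal c * (ENNReal.ofReal (x^2) / ENNReal.ofReal θ) = ⊤ := by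
  have hc0 : c ≠ 0 := left_ne_zero_of_mul hcx
  have hx0 : x ≠ 0 := right_ne_zero_of_mul hcx
  have hx2 : 0 < x^2 := (sq_nonneg x).lt_of_ne (Ne.symm (pow_ne_zero 2 hx0))
  rw [show ENNReal.ofReal θ = 0 from ENNReal.ofReal_eq_zero.mpr (le_of_not_gt hθ),
    ENNReal.div_zero ((ENNReal.ofReal_pos.mpr hx2).ne'),
    ENNReal.mul_top ((ENNReal.ofReal_pos.mpr (hc.lt_of_ne (Ne.symm hc0))).ne')]

lemma key_edge {c c' x y s t s' t' : ℝ} (hc : 0 ≤ c) (hc' : 0 ≤ c')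
    (hs : 0 ≤ s) (ht : 0 ≤ t) (hs' : 0 ≤ s') (ht' : 0 ≤ t') :
    ENNReal.ofReal ((c*x + c'*y)^2) / ENNReal.ofReal (logMean (c*s + c'*s') (c*t + c'*t'))
      ≤ ENNReal.ofReal c * (ENNReal.ofReal (x^2) / ENNReal.ofReal (logMean s t))
        + ENNReal.ofReal c' * (ENNReal.ofReal (y^2) / ENNReal.ofReal (logMean s' t')) := by
  by_cases hθ : 0 < logMean s t
  · by_cases hθ' : 0 < logMean s' t'
    · -- main case: s, t, s', t' > 0
      have hst : 0 < s ∧ 0 < t := by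
        by_contra h
        rw [show logMean s t = 0 from by unfold logMean; rw [if_neg h]] at hθ
        exact lt_irrefl 0 hθ
      have hst' : 0 < s' ∧ 0 < t' := by
        by_contra h
        rw [show logMean s' t' = 0 from by unfold logMean; rw [if_neg h]] at hθ'
        exact lt_irrefl 0 hθ'
      by_cases hcc : c = 0 ∧ c' = 0
      · rw [hcc.1, hcc.2]; simp
      · have hpos : 0 < c * logMean s t + c' * logMean s' t' := by
          rcases not_and_or.mp hcc with h | h
          · have : 0 < c := hc.lt_of_ne (Ne.symm h)
            nlinarith [mul_nonneg hc' hθ'.le]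
          · have : 0 < c' := hc'.lt_of_ne (Ne.symm h)
            nlinarith [mul_nonneg hc hθ.le]
        have hθc : 0 < logMean (c*s + c'*s') (c*t + c'*t') :=
          lt_of_lt_of_le hpos (logMean_concave hc hc' hst.1.le hst.2.le hst'.1.le hst'.2.le)
        have hre : (c*x + c'*y)^2 / logMean (c*s + c'*s') (c*t + c'*t')
            ≤ c * (x^2 / logMean s t) + c' * (y^2 / logMean s' t') := by
          have h1 : (c*x + c'*y)^2 / logMean (c*s + c'*s') (c*t + c'*t')
              ≤ (c*x + c'*y)^2 / (c * logMean s t + c' * logMean s' t') := by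
            apply div_le_div_of_nonneg_left (sq_nonneg _) hpos
            exact logMean_concave hc hc' hst.1.le hst.2.le hst'.1.le hst'.2.le
          refine h1.trans ?_
          have expand : c * (x^2 / logMean s t) + c' * (y^2 / logMean s' t')
              = (c * x^2 * logMean s' t' + c' * y^2 * logMean s t)
                  / (logMean s t * logMean s' t') := by
            field_simp
          rw [expand, div_le_div_iff₀ hpos (mul_pos hθ hθ')]
          nlinarith [mul_nonneg (mul_nonneg hc hc')
            (sq_nonneg (x * logMean s' t' - y * logMean s t)), hθ.le, hθ'.le,
            mul_nonneg hc hc']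
        calc ENNReal.ofReal ((c*x + c'*y)^2)
              / ENNReal.ofReal (logMean (c*s + c'*s') (c*t + c'*t'))
            = ENNReal.ofReal ((c*x + c'*y)^2 / logMean (c*s + c'*s') (c*t + c'*t')) :=
              (ENNReal.ofReal_div_of_pos hθc).symm
          _ ≤ ENNReal.ofReal (c * (x^2 / logMean s t) + c' * (y^2 / logMean s' t')) :=
              ENNReal.ofReal_le_ofReal hre
          _ = ENNReal.ofReal c * (ENNReal.ofReal (x^2) / ENNReal.ofReal (logMean s t))
              + ENNReal.ofReal c' * (ENNReal.ofReal (y^2) / ENNReal.ofReal (logMean s' t')) := by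
              rw [ENNReal.ofReal_add (mul_nonneg hc (div_nonneg (sq_nonneg _) hθ.le))
                  (mul_nonneg hc' (div_nonneg (sq_nonneg _) hθ'.le)),
                ENNReal.ofReal_mul hc, ENNReal.ofReal_mul hc',
                ENNReal.ofReal_div_of_pos hθ, ENNReal.ofReal_div_of_pos hθ']
    · -- `logMean s' t' = 0`
      by_cases hy : c' * y = 0
      · rw [show (c*x + c'*y)^2 = (c*x)^2 from by rw [hy, add_zero]]
        exact le_add_right (ofReal_sq_div_logMean_le hc hc' hs ht hs' ht' hθ)
      · rw [logMean_term_top hc' hy hθ']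
        simp
  · -- `logMean s t = 0`
    by_cases hx : c * x = 0
    · rw [show (c*x + c'*y)^2 = (c'*y)^2 from by rw [hx, zero_add],
        show c*s + c'*s' = c'*s' + c*s from add_comm _ _,
        show c*t + c'*t' = c'*t' + c*t from add_comm _ _]
      by_cases hθ' : 0 < logMean s' t'
      · exact le_add_left (ofReal_sq_div_logMean_le hc' hc hs' ht' hs ht hθ')
      · by_cases hy : c' * y = 0
        · rw [show (c'*y)^2 = 0 from by rw [hy]; ring]
          simp
        · rw [logMean_term_top hc' hy hθ']
          simp
    · rw [logMean_term_top hc hx hθ]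
      simp

lemma actionN_convex (d N : ℕ) [NeZero N] {lam : ℝ} (hl0 : 0 ≤ lam) (hl1 : lam ≤ 1)
    {ρ σ : TN d N → ℝ} (hρ : ∀ a, 0 ≤ ρ a) (hσ : ∀ a, 0 ≤ σ a)
    (V W : TN d N → Fin d → ℝ) :
    actionN d N (fun a => (1-lam) * ρ a + lam * σ a) (fun a i => (1-lam) * V a i + lam * W a i)
      ≤ ENNReal.ofReal (1-lam) * actionN d N ρ V + ENNReal.ofReal lam * actionN d N σ W := by
  unfold actionN
  set K := ENNReal.ofReal (1 / (4 * (d:ℝ)^2 * (N:ℝ)^(d+2))) with hK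
  have hsum : ∑ a : TN d N, ∑ i : Fin d,
      ENNReal.ofReal (((1-lam) * V a i + lam * W a i)^2) /
        ENNReal.ofReal (logMean ((1-lam) * ρ a + lam * σ a)
          ((1-lam) * ρ (a + unitVec d N i) + lam * σ (a + unitVec d N i)))
      ≤ ∑ a : TN d N, ∑ i : Fin d,
        (ENNReal.ofReal (1-lam) * (ENNReal.ofReal ((V a i)^2) /
            ENNReal.ofReal (logMean (ρ a) (ρ (a + unitVec d N i))))
          + ENNReal.ofReal lam * (ENNReal.ofReal ((W a i)^2) /
            ENNReal.ofReal (logMean (σ a) (σ (a + unitVec d N i))))) := by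
    refine Finset.sum_le_sum fun a _ => Finset.sum_le_sum fun i _ => ?_
    exact key_edge (by linarith) hl0 (hρ a) (hρ _) (hσ a) (hσ _)
  refine le_trans (mul_le_mul_right hsum K) (le_of_eq ?_)
  have hdist : ∑ a : TN d N, ∑ i : Fin d,
      (ENNReal.ofReal (1-lam) * (ENNReal.ofReal ((V a i)^2) /
          ENNReal.ofReal (logMean (ρ a) (ρ (a + unitVec d N i))))
        + ENNReal.ofReal lam * (ENNReal.ofReal ((W a i)^2) /
          ENNReal.ofReal (logMean (σ a) (σ (a + unitVec d N i)))))
      = ENNReal.ofReal (1-lam) * ∑ a : TN d N, ∑ i : Fin d,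
          (ENNReal.ofReal ((V a i)^2) /
            ENNReal.ofReal (logMean (ρ a) (ρ (a + unitVec d N i))))
        + ENNReal.ofReal lam * ∑ a : TN d N, ∑ i : Fin d,
          (ENNReal.ofReal ((W a i)^2) /
            ENNReal.ofReal (logMean (σ a) (σ (a + unitVec d N i)))) := by
    rw [Finset.mul_sum, Finset.mul_sum, ← Finset.sum_add_distrib]
    refine Finset.sum_congr rfl fun a _ => ?_
    rw [Finset.mul_sum, Finset.mul_sum, ← Finset.sum_add_distrib]
  rw [hdist]
  ring

lemma combSol (d N : ℕ) [NeZero N] {lam : ℝ} (hl0 : 0 ≤ lam) (hl1 : lam ≤ 1)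
    {ρ σ : ℝ → TN d N → ℝ} {V W : ℝ → TN d N → Fin d → ℝ}
    (hp : DiscCESol d N ρ V) (hq : DiscCESol d N σ W) :
    DiscCESol d N (fun t a => (1-lam) * ρ t a + lam * σ t a)
      (fun t a i => (1-lam) * V t a i + lam * W t a i) := by
  constructor
  · intro t ht
    constructor
    · intro a
      exact add_nonneg (mul_nonneg (by linarith) ((hp.density t ht).1 a))
        (mul_nonneg hl0 ((hq.density t ht).1 a))
    · rw [Finset.sum_add_distrib, ← Finset.mul_sum, ← Finset.mul_sum,
        (hp.density t ht).2, (hq.density t ht).2]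
      ring
  · intro a
    exact (continuousOn_const.mul (hp.cont a)).add (continuousOn_const.mul (hq.cont a))
  · intro a i
    exact ((hp.intV a i).const_mul _).add ((hq.intV a i).const_mul _)
  · intro a φ hφ hsupp
    have hφ' : Continuous (deriv φ) := hφ.continuous_deriv (by simp)
    have h1 : IntervalIntegrable (fun t => (1-lam) * (ρ t a * deriv φ t)) volume 0 1 := by
      apply ContinuousOn.intervalIntegrable
      rw [uIcc_of_le zero_le_one]
      exact continuousOn_const.mul ((hp.cont a).mul hφ'.continuousOn)
    have h2 : IntervalIntegrable (fun t => lam * (σ t a * deriv φ t)) volume 0 1 := by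
      apply ContinuousOn.intervalIntegrable
      rw [uIcc_of_le zero_le_one]
      exact continuousOn_const.mul ((hq.cont a).mul hφ'.continuousOn)
    have hVi : ∀ (U : ℝ → TN d N → Fin d → ℝ),
        (∀ b i, IntervalIntegrable (fun t => U t b i) volume 0 1) →
        IntervalIntegrable (fun t => φ t * ((1/(2*(d:ℝ))) *
          ∑ i : Fin d, (U t a i - U t (a - unitVec d N i) i))) volume 0 1 := by
      intro U hU
      apply IntervalIntegrable.continuousOn_mul ?_ hφ.continuous.continuousOn
      apply IntervalIntegrable.const_mul
      have hsum : (fun t => ∑ i : Fin d, (U t a i - U t (a - unitVec d N i) i))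
          = ∑ i : Fin d, fun t => U t a i - U t (a - unitVec d N i) i := by
        funext t; simp
      rw [hsum]
      exact IntervalIntegrable.sum Finset.univ fun i _ =>
        (hU a i).sub (hU (a - unitVec d N i) i)
    have h3 := hVi V hp.intV
    have h4 := hVi W hq.intV
    calc ∫ t in (0:ℝ)..1, ((1-lam) * ρ t a + lam * σ t a) * deriv φ t
        = ∫ t in (0:ℝ)..1, ((1-lam) * (ρ t a * deriv φ t) + lam * (σ t a * deriv φ t)) :=
          intervalIntegral.integral_congr fun t _ => by ring
      _ = (1-lam) * (∫ t in (0:ℝ)..1, ρ t a * deriv φ t)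
            + lam * (∫ t in (0:ℝ)..1, σ t a * deriv φ t) := by
          rw [intervalIntegral.integral_add h1 h2, intervalIntegral.integral_const_mul,
            intervalIntegral.integral_const_mul]
      _ = (1-lam) * (∫ t in (0:ℝ)..1, φ t * ((1/(2*(d:ℝ))) *
              ∑ i : Fin d, (V t a i - V t (a - unitVec d N i) i)))
            + lam * (∫ t in (0:ℝ)..1, φ t * ((1/(2*(d:ℝ))) *
              ∑ i : Fin d, (W t a i - W t (a - unitVec d N i) i))) := by
          rw [hp.weak a φ hφ hsupp, hq.weak a φ hφ hsupp]
      _ = ∫ t in (0:ℝ)..1, ((1-lam) * (φ t * ((1/(2*(d:ℝ))) *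
              ∑ i : Fin d, (V t a i - V t (a - unitVec d N i) i)))
            + lam * (φ t * ((1/(2*(d:ℝ))) *
              ∑ i : Fin d, (W t a i - W t (a - unitVec d N i) i)))) := by
          rw [intervalIntegral.integral_add (h3.const_mul _) (h4.const_mul _),
            intervalIntegral.integral_const_mul, intervalIntegral.integral_const_mul]
      _ = ∫ t in (0:ℝ)..1, φ t * ((1/(2*(d:ℝ))) *
            ∑ i : Fin d, (((1-lam) * V t a i + lam * W t a i)
              - ((1-lam) * V t (a - unitVec d N i) i + lam * W t (a - unitVec d N i) i))) := by
          refine intervalIntegral.integral_congr fun t _ => ?_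
          have hsum : ∑ i : Fin d, (((1-lam) * V t a i + lam * W t a i)
                - ((1-lam) * V t (a - unitVec d N i) i + lam * W t (a - unitVec d N i) i))
              = (1-lam) * ∑ i : Fin d, (V t a i - V t (a - unitVec d N i) i)
                + lam * ∑ i : Fin d, (W t a i - W t (a - unitVec d N i) i) := by
            rw [Finset.mul_sum, Finset.mul_sum, ← Finset.sum_add_distrib]
            exact Finset.sum_congr rfl fun i _ => by ring
          rw [hsum]; ring

lemma measurable_logMean : Measurable fun q : ℝ × ℝ => logMean q.1 q.2 := by
  have hset : MeasurableSet {q : ℝ × ℝ | 0 < q.1 ∧ 0 < q.2} :=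
    ((isOpen_lt continuous_const continuous_fst).inter
      (isOpen_lt continuous_const continuous_snd)).measurableSet
  have hF : Measurable fun q : ℝ × ℝ => ∫ p in (0:ℝ)..1, q.1 ^ (1-p) * q.2 ^ p := by
    have heq : (fun q : ℝ × ℝ => ∫ p in (0:ℝ)..1, q.1 ^ (1-p) * q.2 ^ p)
        = fun q : ℝ × ℝ => ∫ p, q.1 ^ (1-p) * q.2 ^ p ∂(volume.restrict (Set.Ioc (0:ℝ) 1)) := by
      funext q
      rw [intervalIntegral.integral_of_le zero_le_one]
    rw [heq]
    have hsm : StronglyMeasurable fun z : (ℝ × ℝ) × ℝ => z.1.1 ^ (1 - z.2) * z.1.2 ^ z.2 := by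
      apply Measurable.stronglyMeasurable
      exact (measurable_fst.fst.pow (measurable_const.sub measurable_snd)).mul
        (measurable_fst.snd.pow measurable_snd)
    exact hsm.integral_prod_right'.measurable
  unfold logMean
  exact Measurable.ite hset hF measurable_const

lemma aemeasurable_actionN {d N : ℕ} [NeZero N] {ρ : ℝ → TN d N → ℝ}
    {V : ℝ → TN d N → Fin d → ℝ} (hp : DiscCESol d N ρ V) :
    AEMeasurable (fun t => actionN d N (ρ t) (V t)) (volume.restrict (Icc (0:ℝ) 1)) := by
  have hmeq : volume.restrict (Icc (0:ℝ) 1) = volume.restrict (Ioc (0:ℝ) 1) :=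
    (Measure.restrict_congr_set Ioc_ae_eq_Icc).symm
  have hρm : ∀ a : TN d N, AEMeasurable (fun t => ρ t a) (volume.restrict (Icc (0:ℝ) 1)) :=
    fun a => (hp.cont a).aemeasurable measurableSet_Icc
  have hVm : ∀ (a : TN d N) (i : Fin d),
      AEMeasurable (fun t => V t a i) (volume.restrict (Icc (0:ℝ) 1)) := by
    intro a i
    rw [hmeq]
    exact (hp.intV a i).1.aestronglyMeasurable.aemeasurable
  unfold actionN
  apply AEMeasurable.const_mul
  apply Finset.aemeasurable_fun_sum
  intro a _
  apply Finset.aemeasurable_fun_sum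
  intro i _
  apply AEMeasurable.div
  · exact ENNReal.measurable_ofReal.comp_aemeasurable ((hVm a i).pow_const 2)
  · exact ENNReal.measurable_ofReal.comp_aemeasurable
      (measurable_logMean.comp_aemeasurable ((hρm a).prodMk (hρm (a + unitVec d N i))))

end ConvexityAux

/-- **Convexity of `W_N²`** with respect to linear interpolation of the endpoints. -/
theorem stmt3 (d N : ℕ) [NeZero N] (ρ0 ρ1 σ0 σ1 : TN d N → ℝ)
    (h0 : IsDensity d N ρ0) (h1 : IsDensity d N ρ1)
    (h2 : IsDensity d N σ0) (h3 : IsDensity d N σ1)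
    (lam : ℝ) (hlam0 : 0 ≤ lam) (hlam1 : lam ≤ 1) :
    WNsq d N (fun a => (1 - lam) * ρ0 a + lam * σ0 a) (fun a => (1 - lam) * ρ1 a + lam * σ1 a)
      ≤ ENNReal.ofReal (1 - lam) * WNsq d N ρ0 ρ1 + ENNReal.ofReal lam * WNsq d N σ0 σ1 := by
  rcases eq_or_lt_of_le hlam0 with rfl | hl0
  · simp
  rcases eq_or_lt_of_le hlam1 with rfl | hl1
  · simp
  have hc0 : ENNReal.ofReal (1 - lam) ≠ 0 := by
    rw [Ne, ENNReal.ofReal_eq_zero, not_le]; linarith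
  have hc'0 : ENNReal.ofReal lam ≠ 0 := by
    rw [Ne, ENNReal.ofReal_eq_zero, not_le]; linarith
  by_cases hne : Nonempty {p : (ℝ → TN d N → ℝ) × (ℝ → TN d N → Fin d → ℝ) //
      DiscCESol d N p.1 p.2 ∧ p.1 0 = ρ0 ∧ p.1 1 = ρ1}
  swap
  · haveI := not_nonempty_iff.mp hne
    have htop : WNsq d N ρ0 ρ1 = ⊤ := by unfold WNsq; exact iInf_of_empty _
    rw [htop, ENNReal.mul_top hc0]
    simp
  by_cases hne' : Nonempty {p : (ℝ → TN d N → ℝ) × (ℝ → TN d N → Fin d → ℝ) //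
      DiscCESol d N p.1 p.2 ∧ p.1 0 = σ0 ∧ p.1 1 = σ1}
  swap
  · haveI := not_nonempty_iff.mp hne'
    have htop : WNsq d N σ0 σ1 = ⊤ := by unfold WNsq; exact iInf_of_empty _
    rw [htop, ENNReal.mul_top hc'0]
    simp
  unfold WNsq
  rw [ENNReal.mul_iInf_of_ne hc0 ENNReal.ofReal_ne_top,
    ENNReal.mul_iInf_of_ne hc'0 ENNReal.ofReal_ne_top, ENNReal.iInf_add]
  refine le_iInf fun p => ?_
  rw [ENNReal.add_iInf]
  refine le_iInf fun q => ?_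
  obtain ⟨⟨ρp, Vp⟩, hsolp, hp0, hp1⟩ := p
  obtain ⟨⟨ρq, Vq⟩, hsolq, hq0, hq1⟩ := q
  simp only at hsolp hp0 hp1 hsolq hq0 hq1
  have hsol := combSol d N hlam0 hlam1 hsolp hsolq
  have hend0 : (fun t a => (1-lam) * ρp t a + lam * ρq t a) 0
      = fun a => (1 - lam) * ρ0 a + lam * σ0 a := by
    funext a
    show (1-lam) * ρp 0 a + lam * ρq 0 a = (1 - lam) * ρ0 a + lam * σ0 a
    rw [hp0, hq0]
  have hend1 : (fun t a => (1-lam) * ρp t a + lam * ρq t a) 1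
      = fun a => (1 - lam) * ρ1 a + lam * σ1 a := by
    funext a
    show (1-lam) * ρp 1 a + lam * ρq 1 a = (1 - lam) * ρ1 a + lam * σ1 a
    rw [hp1, hq1]
  have step1 : (∫⁻ t in Icc (0:ℝ) 1, actionN d N
        (fun a => (1-lam) * ρp t a + lam * ρq t a)
        (fun a i => (1-lam) * Vp t a i + lam * Vq t a i))
      ≤ ENNReal.ofReal (1 - lam) * (∫⁻ t in Icc (0:ℝ) 1, actionN d N (ρp t) (Vp t))
        + ENNReal.ofReal lam * (∫⁻ t in Icc (0:ℝ) 1, actionN d N (ρq t) (Vq t)) := by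
    calc (∫⁻ t in Icc (0:ℝ) 1, actionN d N
          (fun a => (1-lam) * ρp t a + lam * ρq t a)
          (fun a i => (1-lam) * Vp t a i + lam * Vq t a i))
        ≤ ∫⁻ t in Icc (0:ℝ) 1, (ENNReal.ofReal (1 - lam) * actionN d N (ρp t) (Vp t)
            + ENNReal.ofReal lam * actionN d N (ρq t) (Vq t)) := by
          refine lintegral_mono_ae ?_
          filter_upwards [ae_restrict_mem measurableSet_Icc] with t ht
          exact actionN_convex d N hlam0 hlam1 (hsolp.density t ht).1 (hsolq.density t ht).1
            (Vp t) (Vq t)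
      _ = ENNReal.ofReal (1 - lam) * (∫⁻ t in Icc (0:ℝ) 1, actionN d N (ρp t) (Vp t))
            + ENNReal.ofReal lam * (∫⁻ t in Icc (0:ℝ) 1, actionN d N (ρq t) (Vq t)) := by
          rw [lintegral_add_left' ((aemeasurable_actionN hsolp).const_mul _),
            lintegral_const_mul' _ _ ENNReal.ofReal_ne_top,
            lintegral_const_mul' _ _ ENNReal.ofReal_ne_top]
  refine iInf_le_of_le ⟨((fun t a => (1-lam) * ρp t a + lam * ρq t a),
    (fun t a i => (1-lam) * Vp t a i + lam * Vq t a i)), hsol, hend0, hend1⟩ ?_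
  exact step1

end GHConv
end
end

section
/- For every N ≥ 1 and all μ₀, μ₁ ∈ P(T^d), W_{2,N}(P_N(μ₀), P_N(μ₁)) ≤ W_2(μ₀, μ₁) + √d / N. -/
open MeasureTheory Filter Set Function
open scoped ENNReal NNReal BigOperators

noncomputable section

namespace GHConv

/-! ### Auxiliary lemmas for `stmt14` -/

section Stmt14Aux

lemma abs_valMinAbs_le {N : ℕ} [NeZero N] (x : ZMod N) (z : ℤ) (hz : (z : ZMod N) = x) :
    |x.valMinAbs| ≤ |z| := by
  have hcast : ((z - x.valMinAbs : ℤ) : ZMod N) = 0 := by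
    push_cast [hz, ZMod.coe_valMinAbs]; ring
  have hdvd : (N : ℤ) ∣ z - x.valMinAbs := (ZMod.intCast_zmod_eq_zero_iff_dvd _ _).mp hcast
  have hIoc := x.valMinAbs_mem_Ioc
  have hbound : 2 * |x.valMinAbs| ≤ N := by
    rcases abs_cases x.valMinAbs with ⟨h1, _⟩ | ⟨h1, _⟩ <;>
      simp only [Set.mem_Ioc] at hIoc <;> omega
  rcases eq_or_ne z x.valMinAbs with rfl | hne
  · exact le_refl _
  · have hsub : (N : ℤ) ≤ |z - x.valMinAbs| :=
      Int.le_of_dvd (abs_pos.mpr (sub_ne_zero.mpr hne)) ((dvd_abs _ _).mpr hdvd)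
    have htri : |z - x.valMinAbs| ≤ |z| + |x.valMinAbs| := abs_sub _ _
    linarith

lemma addCircle_dist_coe (t s : ℝ) :
    dist ((t : AddCircle (1:ℝ))) ((s : AddCircle (1:ℝ))) = |t - s - round (t - s)| := by
  rw [dist_eq_norm, ← QuotientAddGroup.mk_sub, AddCircle.norm_eq]
  norm_num

lemma torusRep_mem (ξ : AddCircle (1:ℝ)) : torusRep ξ ∈ Ico (0:ℝ) 1 := by
  have h := (AddCircle.equivIco (1:ℝ) 0 ξ).2
  norm_num at h
  exact h

lemma coe_torusRep (ξ : AddCircle (1:ℝ)) : ((torusRep ξ : ℝ) : AddCircle (1:ℝ)) = ξ := by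
  have h := (AddCircle.equivIco (1:ℝ) 0).symm_apply_apply ξ
  rw [AddCircle.equivIco, QuotientAddGroup.equivIcoMod_symm_apply] at h
  exact h

lemma measurable_torusRep : Measurable (torusRep) := by
  have h : torusRep = fun x => ((AddCircle.measurableEquivIco (T := (1:ℝ)) 0) x : ℝ) := rfl
  rw [h]
  exact measurable_subtype_coe.comp (AddCircle.measurableEquivIco (T := (1:ℝ)) 0).measurable

lemma measurableSet_cubeSet (d N : ℕ) (a : TN d N) : MeasurableSet (cubeSet d N a) := by
  have h : cubeSet d N a = ⋂ i, (fun x : Td d => torusRep (x i)) ⁻¹'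
      (Ico ((((a i).val : ℕ) : ℝ) / N) (((((a i).val : ℕ) : ℝ) + 1) / N)) := by
    ext x; simp [cubeSet, Set.mem_iInter]
  rw [h]
  exact MeasurableSet.iInter fun i =>
    (measurable_torusRep.comp (measurable_pi_apply i)) measurableSet_Ico

lemma Npos {N : ℕ} [NeZero N] : (0:ℝ) < N := by
  exact_mod_cast Nat.pos_of_ne_zero (NeZero.ne N)

lemma floor_eq_val {d N : ℕ} [NeZero N] {a : TN d N} {x : Td d} (hx : x ∈ cubeSet d N a)
    (i : Fin d) : ⌊(N:ℝ) * torusRep (x i)⌋ = ((a i).val : ℤ) := by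
  have hN : (0:ℝ) < N := Npos
  have h := hx i
  rw [Set.mem_Ico] at h
  rw [Int.floor_eq_iff]
  have h1 : ((a i).val : ℝ) ≤ torusRep (x i) * N := (div_le_iff₀ hN).mp h.1
  have h2 : torusRep (x i) * N < ((a i).val : ℝ) + 1 := (lt_div_iff₀ hN).mp h.2
  constructor
  · push_cast; linarith [mul_comm ((N:ℝ)) (torusRep (x i))]
  · push_cast; linarith [mul_comm ((N:ℝ)) (torusRep (x i))]

lemma mem_cubeSet_discretize (d N : ℕ) [NeZero N] (x : Td d) :
    x ∈ cubeSet d N (discretize d N x) := by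
  intro i
  have hN : (0:ℝ) < N := Npos
  have ht := torusRep_mem (x i)
  set t := torusRep (x i) with hts
  have h0 : 0 ≤ ⌊(N:ℝ) * t⌋ := Int.floor_nonneg.mpr (mul_nonneg hN.le ht.1)
  have h1 : ⌊(N:ℝ) * t⌋ < (N:ℤ) := by
    rw [Int.floor_lt]
    push_cast
    nlinarith [ht.2]
  have hval : ((discretize d N x i).val : ℤ) = ⌊(N:ℝ) * t⌋ := by
    show (((((⌊(N:ℝ) * t⌋ : ℤ) : ZMod N)).val : ℤ)) = ⌊(N:ℝ) * t⌋
    rw [ZMod.val_intCast]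
    exact Int.emod_eq_of_lt h0 h1
  have hvalR : (((discretize d N x i).val : ℕ) : ℝ) = ((⌊(N:ℝ) * t⌋ : ℤ) : ℝ) := by
    exact_mod_cast congrArg (fun z : ℤ => (z : ℝ)) hval
  show t ∈ Ico ((((discretize d N x i).val : ℕ) : ℝ) / N)
      (((((discretize d N x i).val : ℕ) : ℝ) + 1) / N)
  rw [Set.mem_Ico, hvalR]
  constructor
  · rw [div_le_iff₀ hN]
    have := Int.floor_le ((N:ℝ) * t)
    linarith [mul_comm ((N:ℝ)) t]
  · rw [lt_div_iff₀ hN]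
    have := Int.lt_floor_add_one ((N:ℝ) * t)
    linarith [mul_comm ((N:ℝ)) t]

lemma cubeSet_eq (d N : ℕ) [NeZero N] (a : TN d N) :
    cubeSet d N a = discretize d N ⁻¹' {a} := by
  ext x
  simp only [Set.mem_preimage, Set.mem_singleton_iff]
  constructor
  · intro h
    funext i
    have hf := floor_eq_val h i
    show ((⌊(N:ℝ) * torusRep (x i)⌋ : ℤ) : ZMod N) = a i
    rw [hf]
    push_cast
    exact ZMod.natCast_rightInverse (a i)
  · intro h
    have := mem_cubeSet_discretize d N x
    rwa [h] at this

lemma sqrt_sum_sq_add_le {d : ℕ} (u w : Fin d → ℝ) :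
    Real.sqrt (∑ i, (u i + w i)^2) ≤
      Real.sqrt (∑ i, (u i)^2) + Real.sqrt (∑ i, (w i)^2) := by
  have hcs := Real.sum_mul_le_sqrt_mul_sqrt Finset.univ u w
  have h1 : Real.sqrt (∑ i, (u i)^2) ^ 2 = ∑ i, (u i)^2 := Real.sq_sqrt (by positivity)
  have h2 : Real.sqrt (∑ i, (w i)^2) ^ 2 = ∑ i, (w i)^2 := Real.sq_sqrt (by positivity)
  have key : ∑ i, (u i + w i)^2 ≤
      (Real.sqrt (∑ i, (u i)^2) + Real.sqrt (∑ i, (w i)^2))^2 := by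
    have hexp : ∑ i, (u i + w i)^2
        = ∑ i, (u i)^2 + 2 * (∑ i, u i * w i) + ∑ i, (w i)^2 := by
      rw [Finset.mul_sum, ← Finset.sum_add_distrib, ← Finset.sum_add_distrib]
      exact Finset.sum_congr rfl fun i _ => by ring
    nlinarith [hcs, h1, h2]
  calc Real.sqrt (∑ i, (u i + w i)^2)
      ≤ Real.sqrt ((Real.sqrt (∑ i, (u i)^2) + Real.sqrt (∑ i, (w i)^2))^2) :=
        Real.sqrt_le_sqrt key
    _ = _ := Real.sqrt_sq (by positivity)

lemma dN_nonneg (d N : ℕ) [NeZero N] (a b : TN d N) : 0 ≤ dN d N a b := by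
  unfold dN; positivity

lemma dN_le_torusDist {d N : ℕ} [NeZero N] {a b : TN d N} {x y : Td d}
    (hx : x ∈ cubeSet d N a) (hy : y ∈ cubeSet d N b) :
    dN d N a b ≤ torusDist d x y + Real.sqrt d / N := by
  have hN : (0:ℝ) < N := Npos
  -- coordinate bound
  have hco : ∀ i, |(((a i - b i).valMinAbs : ℤ) : ℝ)| ≤ N * dist (x i) (y i) + 1 := by
    intro i
    set t := torusRep (x i) with hts
    set s := torusRep (y i) with hss
    have hfx := floor_eq_val hx i
    have hfy := floor_eq_val hy i
    set k : ℤ := round (t - s) with hk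
    set z : ℤ := ((a i).val : ℤ) - ((b i).val : ℤ) - k * N with hzdef
    have hz : ((z : ℤ) : ZMod N) = a i - b i := by
      have haa : (((a i).val : ℕ) : ZMod N) = a i := ZMod.natCast_rightInverse (a i)
      have hbb : (((b i).val : ℕ) : ZMod N) = b i := ZMod.natCast_rightInverse (b i)
      push_cast [hzdef]
      rw [ZMod.natCast_self, haa, hbb]
      try ring
    have habs : |(a i - b i).valMinAbs| ≤ |z| := abs_valMinAbs_le _ z hz
    have hdist : dist (x i) (y i) = |t - s - (k:ℝ)| := by
      rw [← coe_torusRep (x i), ← coe_torusRep (y i), ← hts, ← hss, addCircle_dist_coe]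
      try norm_cast
    have h1 : ((((a i).val : ℤ)) : ℝ) ≤ (N:ℝ) * t := by
      rw [← hfx]; exact Int.floor_le _
    have h1' : (N:ℝ) * t < ((((a i).val : ℤ)) : ℝ) + 1 := by
      rw [← hfx]; exact Int.lt_floor_add_one _
    have h2 : ((((b i).val : ℤ)) : ℝ) ≤ (N:ℝ) * s := by
      rw [← hfy]; exact Int.floor_le _
    have h2' : (N:ℝ) * s < ((((b i).val : ℤ)) : ℝ) + 1 := by
      rw [← hfy]; exact Int.lt_floor_add_one _
    have hzr : ((z:ℤ):ℝ) = ((((a i).val : ℤ)) : ℝ) - ((((b i).val : ℤ)) : ℝ) - (k:ℝ) * N := by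
      rw [hzdef]; push_cast; ring
    have habs2 : |((z:ℤ):ℝ)| ≤ (N:ℝ) * |t - s - (k:ℝ)| + 1 := by
      rw [abs_le]
      constructor
      · have := neg_abs_le (t - s - (k:ℝ))
        nlinarith
      · have := le_abs_self (t - s - (k:ℝ))
        nlinarith
    calc |(((a i - b i).valMinAbs : ℤ) : ℝ)| = (|(a i - b i).valMinAbs| : ℤ) := by
          rw [← Int.cast_abs]
      _ ≤ ((|z| : ℤ) : ℝ) := by exact_mod_cast habs
      _ = |((z:ℤ):ℝ)| := by rw [Int.cast_abs]
      _ ≤ (N:ℝ) * |t - s - (k:ℝ)| + 1 := habs2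
      _ = N * dist (x i) (y i) + 1 := by rw [hdist]
  -- assemble
  unfold dN torusDist
  have hstep1 : Real.sqrt (∑ i, (((a i - b i).valMinAbs : ℤ) : ℝ)^2)
      ≤ Real.sqrt (∑ i, ((N:ℝ) * dist (x i) (y i) + 1)^2) := by
    apply Real.sqrt_le_sqrt
    apply Finset.sum_le_sum
    intro i _
    have h := hco i
    calc (((a i - b i).valMinAbs : ℤ) : ℝ)^2 = |(((a i - b i).valMinAbs : ℤ) : ℝ)|^2 := by
          rw [sq_abs]
      _ ≤ ((N:ℝ) * dist (x i) (y i) + 1)^2 := by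
          apply pow_le_pow_left₀ (abs_nonneg _) h
  have hstep2 : Real.sqrt (∑ i, ((N:ℝ) * dist (x i) (y i) + 1)^2)
      ≤ Real.sqrt (∑ i, ((N:ℝ) * dist (x i) (y i))^2) + Real.sqrt (∑ _i : Fin d, (1:ℝ)^2) :=
    sqrt_sum_sq_add_le _ _
  have hstep3 : Real.sqrt (∑ i, ((N:ℝ) * dist (x i) (y i))^2)
      = (N:ℝ) * Real.sqrt (∑ i, (dist (x i) (y i))^2) := by
    have : ∑ i, ((N:ℝ) * dist (x i) (y i))^2 = (N:ℝ)^2 * ∑ i, (dist (x i) (y i))^2 := by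
      rw [Finset.mul_sum]; exact Finset.sum_congr rfl fun i _ => by ring
    rw [this, Real.sqrt_mul (sq_nonneg _), Real.sqrt_sq hN.le]
  have hstep4 : Real.sqrt (∑ _i : Fin d, (1:ℝ)^2) = Real.sqrt d := by
    norm_num
  have hfinal : Real.sqrt (∑ i, (((a i - b i).valMinAbs : ℤ) : ℝ)^2)
      ≤ (N:ℝ) * Real.sqrt (∑ i, (dist (x i) (y i))^2) + Real.sqrt d := by
    calc Real.sqrt (∑ i, (((a i - b i).valMinAbs : ℤ) : ℝ)^2)
        ≤ Real.sqrt (∑ i, ((N:ℝ) * dist (x i) (y i) + 1)^2) := hstep1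
      _ ≤ _ := by rw [← hstep3, ← hstep4]; exact hstep2
  calc (1 / (N:ℝ)) * Real.sqrt (∑ i, (((a i - b i).valMinAbs : ℤ) : ℝ)^2)
      ≤ (1 / (N:ℝ)) * ((N:ℝ) * Real.sqrt (∑ i, (dist (x i) (y i))^2) + Real.sqrt d) := by
        apply mul_le_mul_of_nonneg_left hfinal (by positivity)
    _ = Real.sqrt (∑ i, (dist (x i) (y i))^2) + Real.sqrt d / N := by
        field_simp

lemma stmt14_key (d N : ℕ) [NeZero N] (μ0 μ1 : Measure (Td d))
    (h0 : IsProbabilityMeasure μ0) (h1 : IsProbabilityMeasure μ1)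
    (γ : Measure (Td d × Td d)) (hγ : IsCoupling μ0 μ1 γ) :
    W2N d N (PNmeas d N μ0) (PNmeas d N μ1) ≤
      (∫⁻ p, ENNReal.ofReal (torusDist d p.1 p.2 ^ 2) ∂γ) ^ (1/2 : ℝ) +
        ENNReal.ofReal (Real.sqrt d / N) := by
  haveI : IsProbabilityMeasure γ := hγ.1
  have hN : (0:ℝ) < N := Npos
  have hNd : ((N:ℝ))^d ≠ 0 := by positivity
  set c : ℝ := Real.sqrt d / N with hc
  have hc0 : 0 ≤ c := by positivity
  set S : TN d N → Set (Td d) := fun a => discretize d N ⁻¹' {a} with hS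
  have hSc : ∀ a, S a = cubeSet d N a := fun a => (cubeSet_eq d N a).symm
  have hSm : ∀ a, MeasurableSet (S a) := fun a => by
    rw [hSc]; exact measurableSet_cubeSet d N a
  set B : TN d N × TN d N → Set (Td d × Td d) := fun p => S p.1 ×ˢ S p.2 with hB
  have hBm : ∀ p, MeasurableSet (B p) := fun p => (hSm p.1).prod (hSm p.2)
  set γN : TN d N × TN d N → ℝ := fun p => (γ (B p)).toReal with hγN
  have hne : ∀ s : Set (Td d × Td d), γ s ≠ ⊤ := fun s => measure_ne_top γ s
  have hdisjB : ∀ (p q : TN d N × TN d N), p ≠ q → Disjoint (B p) (B q) := by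
    intro p q hpq
    rw [Set.disjoint_left]
    rintro ⟨x, y⟩ hxy hxy'
    simp only [hB, hS, Set.mem_prod, Set.mem_preimage, Set.mem_singleton_iff] at hxy hxy'
    exact hpq (Prod.ext (hxy.1.symm.trans hxy'.1) (hxy.2.symm.trans hxy'.2))
  have hpdAll : (↑(Finset.univ : Finset (TN d N × TN d N)) : Set _).PairwiseDisjoint B :=
    fun p _ q _ hpq => hdisjB p q hpq
  have hunionAll : (⋃ p ∈ (Finset.univ : Finset (TN d N × TN d N)), B p) = Set.univ := by
    ext ⟨x, y⟩
    simp only [Finset.mem_univ, Set.iUnion_true, Set.mem_iUnion, hB, hS, Set.mem_prod,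
      Set.mem_preimage, Set.mem_singleton_iff, Set.mem_univ, iff_true]
    exact ⟨(discretize d N x, discretize d N y), rfl, rfl⟩
  -- marginals
  have hsum1 : ∀ a, ∑ b, γN (a, b) = (μ0 (S a)).toReal := by
    intro a
    have hpd : (↑(Finset.univ : Finset (TN d N)) : Set (TN d N)).PairwiseDisjoint
        (fun b => S a ×ˢ S b) := fun b _ b' _ hbb' =>
      hdisjB (a, b) (a, b') (fun h => hbb' (congrArg Prod.snd h))
    have hunion : (⋃ b ∈ (Finset.univ : Finset (TN d N)), S a ×ˢ S b) = S a ×ˢ Set.univ := by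
      ext ⟨x, y⟩
      simp only [Finset.mem_univ, Set.iUnion_true, Set.mem_iUnion, hS, Set.mem_prod,
        Set.mem_preimage, Set.mem_singleton_iff, Set.mem_univ, and_true]
      exact ⟨fun ⟨b, hb, _⟩ => hb, fun h => ⟨discretize d N y, h, rfl⟩⟩
    have hmeas := measure_biUnion_finset (μ := γ) hpd (fun b _ => (hSm a).prod (hSm b))
    rw [hunion] at hmeas
    have hfst : γ (S a ×ˢ Set.univ) = μ0 (S a) := by
      rw [← hγ.2.1, Measure.map_apply measurable_fst (hSm a), Set.prod_univ]
    calc ∑ b, γN (a, b) = (∑ b, γ (S a ×ˢ S b)).toReal :=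
          (ENNReal.toReal_sum (fun b _ => hne _)).symm
      _ = (γ (S a ×ˢ Set.univ)).toReal := by rw [← hmeas]
      _ = (μ0 (S a)).toReal := by rw [hfst]
  have hsum2 : ∀ b, ∑ a, γN (a, b) = (μ1 (S b)).toReal := by
    intro b
    have hpd : (↑(Finset.univ : Finset (TN d N)) : Set (TN d N)).PairwiseDisjoint
        (fun a => S a ×ˢ S b) := fun a _ a' _ haa' =>
      hdisjB (a, b) (a', b) (fun h => haa' (congrArg Prod.fst h))
    have hunion : (⋃ a ∈ (Finset.univ : Finset (TN d N)), S a ×ˢ S b) = Set.univ ×ˢ S b := by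
      ext ⟨x, y⟩
      simp only [Finset.mem_univ, Set.iUnion_true, Set.mem_iUnion, hS, Set.mem_prod,
        Set.mem_preimage, Set.mem_singleton_iff, Set.mem_univ, true_and]
      exact ⟨fun ⟨a, _, hb⟩ => hb, fun h => ⟨discretize d N x, rfl, h⟩⟩
    have hmeas := measure_biUnion_finset (μ := γ) hpd (fun a _ => (hSm a).prod (hSm b))
    rw [hunion] at hmeas
    have hsnd : γ (Set.univ ×ˢ S b) = μ1 (S b) := by
      rw [← hγ.2.2, Measure.map_apply measurable_snd (hSm b), Set.univ_prod]
    calc ∑ a, γN (a, b) = (∑ a, γ (S a ×ˢ S b)).toReal :=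
          (ENNReal.toReal_sum (fun a _ => hne _)).symm
      _ = (γ (Set.univ ×ˢ S b)).toReal := by rw [← hmeas]
      _ = (μ1 (S b)).toReal := by rw [hsnd]
  have hsumAll : ∑ p : TN d N × TN d N, γN p = 1 := by
    have hmeas := measure_biUnion_finset (μ := γ) hpdAll (fun p _ => hBm p)
    rw [hunionAll, measure_univ] at hmeas
    calc ∑ p : TN d N × TN d N, γN p = (∑ p : TN d N × TN d N, γ (B p)).toReal :=
          (ENNReal.toReal_sum (fun p _ => hne _)).symm
      _ = (1 : ℝ≥0∞).toReal := by rw [← hmeas]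
      _ = 1 := ENNReal.toReal_one
  -- the discrete coupling
  have hcpl : IsDiscCoupling d N (PNmeas d N μ0) (PNmeas d N μ1) γN := by
    refine ⟨fun p => ENNReal.toReal_nonneg, fun a => ?_, fun b => ?_⟩
    · rw [hsum1 a, hSc]
      simp only [PNmeas]
      rw [eq_div_iff hNd]
      ring
    · rw [hsum2 b, hSc]
      simp only [PNmeas]
      rw [eq_div_iff hNd]
      ring
  have hW2Nsq : W2Nsq d N (PNmeas d N μ0) (PNmeas d N μ1) ≤
      ENNReal.ofReal (∑ p : TN d N × TN d N, dN d N p.1 p.2 ^ 2 * γN p) :=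
    iInf_le _ (⟨γN, hcpl⟩ : {γ' : TN d N × TN d N → ℝ //
      IsDiscCoupling d N (PNmeas d N μ0) (PNmeas d N μ1) γ'})
  -- the continuous cost
  set f : Td d × Td d → ℝ := fun q => torusDist d q.1 q.2 ^ 2 with hf
  have htd : Continuous fun q : Td d × Td d => torusDist d q.1 q.2 := by
    simp only [torusDist]
    exact Real.continuous_sqrt.comp (continuous_finset_sum _ fun i _ =>
      (((continuous_apply i).comp continuous_fst).dist
        ((continuous_apply i).comp continuous_snd)).pow 2)
  have hfc : Continuous f := htd.pow 2
  have hfi : Integrable f γ := by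
    apply hfc.integrable_of_hasCompactSupport
    exact IsCompact.of_isClosed_subset isCompact_univ (isClosed_tsupport f) (Set.subset_univ _)
  set R : ℝ := ∫ q, f q ∂γ with hR
  have hR0 : 0 ≤ R := integral_nonneg fun q => sq_nonneg _
  set I : TN d N × TN d N → ℝ := fun p => ∫ q in B p, f q ∂γ with hI
  have hI0 : ∀ p, 0 ≤ I p := fun p => setIntegral_nonneg (hBm p) fun q _ => sq_nonneg _
  have hIsum : ∑ p, I p = R := by
    have h := integral_biUnion_finset Finset.univ (f := f) (μ := γ) (fun p _ => hBm p)
      hpdAll (fun p _ => hfi.integrableOn)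
    rw [hunionAll, Measure.restrict_univ] at h
    exact h.symm
  have hblock : ∀ p : TN d N × TN d N,
      dN d N p.1 p.2 ^ 2 * γN p ≤ (Real.sqrt (I p) + c * Real.sqrt (γN p))^2 := by
    intro p
    set D := dN d N p.1 p.2 with hD
    have hD0 : 0 ≤ D := dN_nonneg d N p.1 p.2
    set m := max (D - c) 0 with hm
    have hm0 : 0 ≤ m := le_max_right _ _
    have hmc : D ≤ m + c := by
      have : D - c ≤ m := le_max_left _ _
      linarith
    have hpt : ∀ q ∈ B p, m^2 ≤ f q := by
      rintro ⟨x, y⟩ hq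
      have hx : x ∈ cubeSet d N p.1 := by rw [← hSc]; exact hq.1
      have hy : y ∈ cubeSet d N p.2 := by rw [← hSc]; exact hq.2
      have hle : D ≤ torusDist d x y + c := dN_le_torusDist hx hy
      have h0td : 0 ≤ torusDist d x y := Real.sqrt_nonneg _
      have hmle : m ≤ torusDist d x y := max_le (by linarith) h0td
      calc m^2 ≤ (torusDist d x y)^2 := pow_le_pow_left₀ hm0 hmle 2
        _ = f (x, y) := rfl
    have hIge : m^2 * γN p ≤ I p :=
      setIntegral_ge_of_const_le_real (hBm p) (hne _) hpt hfi.integrableOn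
    have hsq : m * Real.sqrt (γN p) ≤ Real.sqrt (I p) := by
      have h1 : Real.sqrt (m^2 * γN p) ≤ Real.sqrt (I p) := Real.sqrt_le_sqrt hIge
      rwa [Real.sqrt_mul (sq_nonneg m), Real.sqrt_sq hm0] at h1
    have hw0 : 0 ≤ γN p := ENNReal.toReal_nonneg
    have hDw : D * Real.sqrt (γN p) ≤ Real.sqrt (I p) + c * Real.sqrt (γN p) := by
      calc D * Real.sqrt (γN p) ≤ (m + c) * Real.sqrt (γN p) :=
            mul_le_mul_of_nonneg_right hmc (Real.sqrt_nonneg _)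
        _ = m * Real.sqrt (γN p) + c * Real.sqrt (γN p) := by ring
        _ ≤ _ := by linarith
    calc D^2 * γN p = (D * Real.sqrt (γN p))^2 := by
          rw [mul_pow, Real.sq_sqrt hw0]
      _ ≤ (Real.sqrt (I p) + c * Real.sqrt (γN p))^2 :=
          pow_le_pow_left₀ (by positivity) hDw 2
  have hcs : ∑ p, Real.sqrt (I p) * Real.sqrt (γN p) ≤ Real.sqrt R := by
    have h := Real.sum_sqrt_mul_sqrt_le (f := I) (g := γN) Finset.univ hI0 (fun p => ENNReal.toReal_nonneg)
    rw [hIsum, hsumAll, Real.sqrt_one, mul_one] at h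
    exact h
  have hsumbound : ∑ p : TN d N × TN d N, dN d N p.1 p.2 ^2 * γN p ≤ (Real.sqrt R + c)^2 := by
    calc ∑ p : TN d N × TN d N, dN d N p.1 p.2 ^2 * γN p
        ≤ ∑ p, (Real.sqrt (I p) + c * Real.sqrt (γN p))^2 :=
          Finset.sum_le_sum fun p _ => hblock p
      _ = ∑ p, (I p + 2*c*(Real.sqrt (I p)*Real.sqrt (γN p)) + c^2 * γN p) := by
          apply Finset.sum_congr rfl
          intro p _
          have h1 : Real.sqrt (I p)^2 = I p := Real.sq_sqrt (hI0 p)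
          have h2 : Real.sqrt (γN p)^2 = γN p := Real.sq_sqrt ENNReal.toReal_nonneg
          calc (Real.sqrt (I p) + c * Real.sqrt (γN p))^2
              = Real.sqrt (I p)^2 + 2*c*(Real.sqrt (I p)*Real.sqrt (γN p))
                + c^2 * Real.sqrt (γN p)^2 := by ring
            _ = I p + 2*c*(Real.sqrt (I p)*Real.sqrt (γN p)) + c^2 * γN p := by rw [h1, h2]
      _ = R + 2*c*(∑ p, Real.sqrt (I p)*Real.sqrt (γN p)) + c^2 := by
          rw [Finset.sum_add_distrib, Finset.sum_add_distrib, ← Finset.mul_sum,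
            ← Finset.mul_sum, hIsum, hsumAll]
          ring
      _ ≤ R + 2*c*Real.sqrt R + c^2 := by nlinarith [hcs, hc0]
      _ = (Real.sqrt R + c)^2 := by rw [add_sq, Real.sq_sqrt hR0]; ring
  have hWsq2 : W2Nsq d N (PNmeas d N μ0) (PNmeas d N μ1) ≤
      ENNReal.ofReal ((Real.sqrt R + c)^2) :=
    hW2Nsq.trans (ENNReal.ofReal_le_ofReal hsumbound)
  have hculm : (ENNReal.ofReal ((Real.sqrt R + c)^2)) ^ (1/2 : ℝ)
      = ENNReal.ofReal (Real.sqrt R) + ENNReal.ofReal c := by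
    have hnn : 0 ≤ Real.sqrt R + c := by positivity
    rw [ENNReal.ofReal_pow hnn 2,
      ← ENNReal.rpow_natCast (ENNReal.ofReal (Real.sqrt R + c)) 2, ← ENNReal.rpow_mul]
    norm_num
    exact ENNReal.ofReal_add (Real.sqrt_nonneg _) hc0
  have hlint : ENNReal.ofReal R = ∫⁻ q, ENNReal.ofReal (f q) ∂γ :=
    MeasureTheory.ofReal_integral_eq_lintegral_ofReal hfi
      (Filter.Eventually.of_forall fun q => sq_nonneg _)
  have hsqrtR : ENNReal.ofReal (Real.sqrt R) = (∫⁻ q, ENNReal.ofReal (f q) ∂γ) ^ (1/2:ℝ) := by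
    rw [Real.sqrt_eq_rpow, ← ENNReal.ofReal_rpow_of_nonneg hR0 (by norm_num), hlint]
  calc W2N d N (PNmeas d N μ0) (PNmeas d N μ1)
      = (W2Nsq d N (PNmeas d N μ0) (PNmeas d N μ1)) ^ (1/2 : ℝ) := rfl
    _ ≤ (ENNReal.ofReal ((Real.sqrt R + c)^2)) ^ (1/2 : ℝ) :=
        ENNReal.rpow_le_rpow hWsq2 (by norm_num)
    _ = ENNReal.ofReal (Real.sqrt R) + ENNReal.ofReal c := hculm
    _ = (∫⁻ q, ENNReal.ofReal (f q) ∂γ) ^ (1/2:ℝ) + ENNReal.ofReal c := by rw [hsqrtR]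

end Stmt14Aux

/-- `W_{2,N}(P_N μ₀, P_N μ₁) ≤ W_2(μ₀, μ₁) + √d / N`. -/
theorem stmt14 (d N : ℕ) [NeZero N] (hN : 1 ≤ N)
    (μ0 μ1 : Measure (Td d)) (h0 : IsProbabilityMeasure μ0) (h1 : IsProbabilityMeasure μ1) :
    W2N d N (PNmeas d N μ0) (PNmeas d N μ1) ≤ W2 d μ0 μ1 + ENNReal.ofReal (Real.sqrt d / N) := by
  set L : {γ : Measure (Td d × Td d) // IsCoupling μ0 μ1 γ} → ℝ≥0∞ :=
    fun γ => ∫⁻ p, ENNReal.ofReal (torusDist d p.1 p.2 ^ 2) ∂(γ : Measure (Td d × Td d))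
    with hL
  by_cases hne : Nonempty {γ : Measure (Td d × Td d) // IsCoupling μ0 μ1 γ}
  · haveI := hne
    have hkey : ∀ γ : {γ : Measure (Td d × Td d) // IsCoupling μ0 μ1 γ},
        W2N d N (PNmeas d N μ0) (PNmeas d N μ1) ≤
          L γ ^ (1/2:ℝ) + ENNReal.ofReal (Real.sqrt d / N) :=
      fun γ => stmt14_key d N μ0 μ1 h0 h1 γ γ.2
    have h2' : (⨅ γ, L γ ^ (1/2:ℝ)) = (⨅ γ, L γ) ^ (1/2:ℝ) := by
      have h := OrderIso.map_iInf (ENNReal.orderIsoRpow (1/2 : ℝ) (by norm_num)) L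
      simp only [ENNReal.orderIsoRpow_apply] at h
      exact h.symm
    calc W2N d N (PNmeas d N μ0) (PNmeas d N μ1)
        ≤ ⨅ γ, (L γ ^ (1/2:ℝ) + ENNReal.ofReal (Real.sqrt d / N)) := le_iInf hkey
      _ = (⨅ γ, L γ ^ (1/2:ℝ)) + ENNReal.ofReal (Real.sqrt d / N) := (ENNReal.iInf_add).symm
      _ = (⨅ γ, L γ) ^ (1/2:ℝ) + ENNReal.ofReal (Real.sqrt d / N) := by rw [h2']
      _ = W2 d μ0 μ1 + ENNReal.ofReal (Real.sqrt d / N) := rfl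
  · rw [not_nonempty_iff] at hne
    have htop : W2 d μ0 μ1 = ⊤ := by
      rw [W2, W2sq, iInf_of_empty]
      exact ENNReal.top_rpow_of_pos (by norm_num)
    rw [htop, top_add]
    exact le_top

end GHConv
end
end

section
/- Let δ > 0, let N be an integer with N > δ^{−2}, and let ρ^N_0, ρ^N_1 ∈ D_δ(T_N^d). Then W̃_N(ρ^N_0, ρ^N_1) ≤ (1 − 1/(δ⁴N²))^{−1/2} · W_{N,δ}(ρ^N_0, ρ^N_1). -/
open MeasureTheory Filter Set Function
open scoped ENNReal NNReal BigOperators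

noncomputable section

namespace GHConv

/-! ### Auxiliary lemmas for `stmt18` -/

private lemma logMean_le_avg' {s t : ℝ} (hs : 0 < s) (ht : 0 < t) :
    (∫ p in (0:ℝ)..1, s ^ (1 - p) * t ^ p) ≤ (s + t) / 2 := by
  have hcont : Continuous fun p : ℝ => s ^ (1 - p) * t ^ p := by
    have : (fun p : ℝ => s ^ (1 - p) * t ^ p) =
        fun p => Real.exp (Real.log s * (1 - p)) * Real.exp (Real.log t * p) := by
      funext p
      rw [Real.rpow_def_of_pos hs, Real.rpow_def_of_pos ht]
    rw [this]; fun_prop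
  have h1 : IntervalIntegrable (fun p : ℝ => s ^ (1 - p) * t ^ p) volume 0 1 :=
    hcont.intervalIntegrable 0 1
  have h2 : IntervalIntegrable (fun p : ℝ => (1 - p) * s + p * t) volume 0 1 :=
    (Continuous.intervalIntegrable (by fun_prop) 0 1)
  have hmono : (∫ p in (0:ℝ)..1, s ^ (1 - p) * t ^ p) ≤
      ∫ p in (0:ℝ)..1, ((1 - p) * s + p * t) := by
    apply intervalIntegral.integral_mono_on (by norm_num) h1 h2
    intro p hp
    exact Real.geom_mean_le_arith_mean2_weighted (by linarith [hp.2]) hp.1 hs.le ht.le (by ring)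
  have hcomp : (∫ p in (0:ℝ)..1, ((1 - p) * s + p * t)) = (s + t) / 2 := by
    have : (fun p : ℝ => (1 - p) * s + p * t) = fun p => s + p * (t - s) := by
      funext p; ring
    rw [this, intervalIntegral.integral_add (intervalIntegrable_const)
      ((Continuous.intervalIntegrable (by fun_prop : Continuous fun p : ℝ => p * (t - s)) 0 1)),
      intervalIntegral.integral_mul_const, integral_id, intervalIntegral.integral_const]
    norm_num; ring
  linarith

private lemma key_mean {δ s t : ℝ} {N : ℕ} (hδ : 0 < δ) (hN : 1 / δ^2 < (N:ℝ))
    (hs : δ ≤ s) (ht : δ ≤ t) (hst : |s - t| ≤ δ⁻¹ * (1 / N)) :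
    (1 - 1/(δ^4 * (N:ℝ)^2)) * logMean s t ≤ harmMean s t := by
  have hN0 : (0:ℝ) < N := lt_trans (by positivity) hN
  have hd2 : 1 < (N:ℝ) * δ^2 := by rwa [div_lt_iff₀ (by positivity)] at hN
  have hs0 : 0 < s := lt_of_lt_of_le hδ hs
  have ht0 : 0 < t := lt_of_lt_of_le hδ ht
  rw [logMean, harmMean, if_pos ⟨hs0, ht0⟩, if_pos ⟨hs0, ht0⟩]
  have h1 : (s - t)^2 ≤ 1/(δ^2 * (N:ℝ)^2) := by
    calc (s-t)^2 = |s-t|^2 := (sq_abs _).symm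
    _ ≤ (δ⁻¹ * (1/N))^2 := by
        apply pow_le_pow_left₀ (abs_nonneg _) hst
    _ = 1/(δ^2 * (N:ℝ)^2) := by field_simp
  have hc : 0 ≤ 1 - 1/(δ^4 * (N:ℝ)^2) := by
    have h4 : 1 ≤ δ^4 * (N:ℝ)^2 := by nlinarith
    have h5 : 1/(δ^4 * (N:ℝ)^2) ≤ 1 := by
      rw [div_le_one (by positivity)]; exact h4
    linarith
  have hlm := logMean_le_avg' hs0 ht0
  have step1 : (1 - 1/(δ^4 * (N:ℝ)^2)) * (∫ p in (0:ℝ)..1, s ^ (1 - p) * t ^ p)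
      ≤ (1 - 1/(δ^4 * (N:ℝ)^2)) * ((s + t) / 2) :=
    mul_le_mul_of_nonneg_left hlm hc
  have hkey : (s-t)^2 ≤ (1/(δ^4 * (N:ℝ)^2)) * (s+t)^2 := by
    have h2 : 4*δ^2 ≤ (s+t)^2 := by nlinarith
    calc (s-t)^2 ≤ 1/(δ^2 * (N:ℝ)^2) := h1
    _ ≤ (1/(δ^4 * (N:ℝ)^2)) * (4*δ^2) := by
        have he : (1/(δ^4 * (N:ℝ)^2)) * (4*δ^2) = 4/(δ^2 * (N:ℝ)^2) := by
          field_simp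
        rw [he, div_le_div_iff₀ (by positivity) (by positivity)]
        nlinarith [show (0:ℝ) < δ^2 * (N:ℝ)^2 by positivity]
    _ ≤ (1/(δ^4 * (N:ℝ)^2)) * (s+t)^2 := mul_le_mul_of_nonneg_left h2 (by positivity)
  have step2 : (1 - 1/(δ^4 * (N:ℝ)^2)) * ((s + t) / 2) ≤ 2 * s * t / (s + t) := by
    rw [le_div_iff₀ (by linarith : (0:ℝ) < s + t)]
    nlinarith [hkey]
  linarith

private lemma natAbs_valMinAbs_le_val_neg {N : ℕ} [NeZero N] (x : ZMod N) :
    x.valMinAbs.natAbs ≤ (-x).val := by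
  rcases eq_or_ne x 0 with rfl | hx
  · simp
  · rw [ZMod.neg_val, if_neg hx, ZMod.valMinAbs_def_pos]
    have hvlt : x.val < N := ZMod.val_lt x
    split_ifs with h
    · simp only [Int.natAbs_natCast]
      omega
    · push_neg at h
      have h1 : (x.val : ℤ) - N = -((N : ℤ) - x.val) := by ring
      rw [h1, Int.natAbs_neg]
      have h2 : ((N : ℤ) - x.val) = ((N - x.val : ℕ) : ℤ) := by omega
      rw [h2, Int.natAbs_natCast]

private lemma sq_valMinAbs_neg_one {N : ℕ} [NeZero N] :
    ((((-1 : ZMod N).valMinAbs : ℤ) : ℝ))^2 ≤ 1 := by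
  have h : ((-1 : ZMod N).valMinAbs).natAbs ≤ 1 := by
    have h0 := natAbs_valMinAbs_le_val_neg (-1 : ZMod N)
    rw [neg_neg] at h0
    calc ((-1 : ZMod N).valMinAbs).natAbs ≤ (1 : ZMod N).val := h0
    _ = 1 % N := ZMod.val_one_eq_one_mod N
    _ ≤ 1 := Nat.mod_le 1 N
  have h2 : |((-1 : ZMod N).valMinAbs : ℤ)| ≤ 1 := by
    rw [Int.abs_eq_natAbs]; exact_mod_cast h
  have h3 := abs_le.mp h2
  have h4 : (-1:ℝ) ≤ (((-1 : ZMod N).valMinAbs : ℤ) : ℝ) := by exact_mod_cast h3.1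
  have h5 : (((-1 : ZMod N).valMinAbs : ℤ) : ℝ) ≤ 1 := by exact_mod_cast h3.2
  nlinarith

private lemma dN_edge (d N : ℕ) [NeZero N] (a : TN d N) (i : Fin d) :
    dN d N a (a + unitVec d N i) ≤ 1 / N := by
  have hN0 : (0:ℝ) < N := by
    have := NeZero.pos N; exact_mod_cast this
  rw [dN]
  have hsum : (∑ j : Fin d, (((a j - (a + unitVec d N i) j).valMinAbs : ℤ) : ℝ)^2) ≤ 1 := by
    have hterm : ∀ j : Fin d,
        (((a j - (a + unitVec d N i) j).valMinAbs : ℤ) : ℝ)^2 ≤ if j = i then 1 else 0 := by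
      intro j
      by_cases hj : j = i
      · subst hj
        have h1 : a j - (a + unitVec d N j) j = -1 := by
          simp [unitVec, Pi.add_apply]
        rw [if_pos rfl, h1]
        exact sq_valMinAbs_neg_one
      · have h1 : a j - (a + unitVec d N i) j = 0 := by
          simp [unitVec, Pi.add_apply, hj]
        rw [if_neg hj, h1]
        simp
    calc (∑ j : Fin d, (((a j - (a + unitVec d N i) j).valMinAbs : ℤ) : ℝ)^2)
        ≤ ∑ j : Fin d, (if j = i then (1:ℝ) else 0) :=
          Finset.sum_le_sum fun j _ => hterm j
    _ = 1 := by simp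
  have hsqrt : Real.sqrt (∑ j : Fin d, (((a j - (a + unitVec d N i) j).valMinAbs : ℤ) : ℝ)^2)
      ≤ 1 := by
    calc Real.sqrt _ ≤ Real.sqrt 1 := Real.sqrt_le_sqrt hsum
    _ = 1 := Real.sqrt_one
  calc (1 / (N:ℝ)) * Real.sqrt _ ≤ (1 / (N:ℝ)) * 1 :=
    mul_le_mul_of_nonneg_left hsqrt (by positivity)
  _ = 1 / N := mul_one _

private lemma action_compare (d N : ℕ) [NeZero N] {δ : ℝ} (hδ : 0 < δ)
    (hN : 1 / δ^2 < (N:ℝ)) {ρ : TN d N → ℝ} (hρ : InDreg d N δ ρ)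
    (V : TN d N → Fin d → ℝ) :
    actionHarmN d N ρ V ≤
      (ENNReal.ofReal (1 - 1/(δ^4 * (N:ℝ)^2)))⁻¹ * actionN d N ρ V := by
  have hN0 : (0:ℝ) < N := lt_trans (by positivity) hN
  have hd2 : 1 < (N:ℝ) * δ^2 := by rwa [div_lt_iff₀ (by positivity)] at hN
  have hc0 : 0 < 1 - 1/(δ^4 * (N:ℝ)^2) := by
    have h4 : 1 < δ^4 * (N:ℝ)^2 := by nlinarith
    have h5 : 1/(δ^4 * (N:ℝ)^2) < 1 := by
      rw [div_lt_one (by positivity)]; exact h4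
    linarith
  set e : ℝ≥0∞ := ENNReal.ofReal (1 - 1/(δ^4 * (N:ℝ)^2)) with hedef
  have he0 : e ≠ 0 := (ENNReal.ofReal_pos.mpr hc0).ne'
  have heT : e ≠ ⊤ := ENNReal.ofReal_ne_top
  rw [actionHarmN, actionN, mul_left_comm]
  refine mul_le_mul_right ?_ _
  rw [Finset.mul_sum]
  refine Finset.sum_le_sum fun a _ => ?_
  rw [Finset.mul_sum]
  refine Finset.sum_le_sum fun i _ => ?_
  have hs : δ ≤ ρ a := hρ.2.1 a
  have ht : δ ≤ ρ (a + unitVec d N i) := hρ.2.1 _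
  have hst : |ρ a - ρ (a + unitVec d N i)| ≤ δ⁻¹ * (1/N) := by
    calc |ρ a - ρ (a + unitVec d N i)| ≤ δ⁻¹ * dN d N a (a + unitVec d N i) :=
      hρ.2.2 a _
    _ ≤ δ⁻¹ * (1/N) := mul_le_mul_of_nonneg_left (dN_edge d N a i) (by positivity)
  have hkey := key_mean hδ hN hs ht hst
  have h2 : e * ENNReal.ofReal (logMean (ρ a) (ρ (a + unitVec d N i))) ≤
      ENNReal.ofReal (harmMean (ρ a) (ρ (a + unitVec d N i))) := by
    rw [hedef, ← ENNReal.ofReal_mul hc0.le]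
    exact ENNReal.ofReal_le_ofReal hkey
  calc ENNReal.ofReal ((V a i)^2) /
        ENNReal.ofReal (harmMean (ρ a) (ρ (a + unitVec d N i)))
      ≤ ENNReal.ofReal ((V a i)^2) /
        (e * ENNReal.ofReal (logMean (ρ a) (ρ (a + unitVec d N i)))) :=
        ENNReal.div_le_div_left h2 _
  _ = e⁻¹ * (ENNReal.ofReal ((V a i)^2) /
        ENNReal.ofReal (logMean (ρ a) (ρ (a + unitVec d N i)))) := by
      rw [div_eq_mul_inv, ENNReal.mul_inv (Or.inl he0) (Or.inl heT), div_eq_mul_inv]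
      ring

set_option maxHeartbeats 1000000 in
/-- Comparison of the harmonic-mean metric with the restricted logarithmic-mean metric on
regular densities: `W̃_N ≤ (1 - 1/(δ⁴N²))^{-1/2} W_{N,δ}` for `N > δ⁻²`. -/
theorem stmt18 (d N : ℕ) [NeZero N] (δ : ℝ) (hδ : 0 < δ) (hN : 1 / δ^2 < (N:ℝ))
    (ρ0 ρ1 : TN d N → ℝ) (h0 : InDreg d N δ ρ0) (h1 : InDreg d N δ ρ1) :
    WtildeN d N ρ0 ρ1 ≤
      ENNReal.ofReal ((1 - 1/(δ^4 * (N:ℝ)^2)) ^ (-(1/2) : ℝ)) * WNdelta d N δ ρ0 ρ1 := by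
  have hN0 : (0:ℝ) < N := lt_trans (by positivity) hN
  have hd2 : 1 < (N:ℝ) * δ^2 := by rwa [div_lt_iff₀ (by positivity)] at hN
  have hc0 : 0 < 1 - 1/(δ^4 * (N:ℝ)^2) := by
    have h4 : 1 < δ^4 * (N:ℝ)^2 := by nlinarith
    have h5 : 1/(δ^4 * (N:ℝ)^2) < 1 := by
      rw [div_lt_one (by positivity)]; exact h4
    linarith
  set e : ℝ≥0∞ := ENNReal.ofReal (1 - 1/(δ^4 * (N:ℝ)^2)) with hedef
  have he0 : e ≠ 0 := (ENNReal.ofReal_pos.mpr hc0).ne'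
  have heT : e ≠ ⊤ := ENNReal.ofReal_ne_top
  have heiT : e⁻¹ ≠ ⊤ := ENNReal.inv_ne_top.mpr he0
  -- Step A: comparison of the squared distances via each restricted candidate
  have stepA : ∀ p : {p : (ℝ → TN d N → ℝ) × (ℝ → TN d N → Fin d → ℝ) //
      DiscCESol d N p.1 p.2 ∧ p.1 0 = ρ0 ∧ p.1 1 = ρ1 ∧
        ∀ t ∈ Icc (0:ℝ) 1, InDreg d N δ (p.1 t)},
      WtildeNsq d N ρ0 ρ1 ≤
        e⁻¹ * ∫⁻ t in Icc (0:ℝ) 1, actionN d N (p.1.1 t) (p.1.2 t) := by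
    rintro ⟨⟨ρ, V⟩, hsol, h0', h1', hreg⟩
    have hle : WtildeNsq d N ρ0 ρ1 ≤
        ∫⁻ t in Icc (0:ℝ) 1, actionHarmN d N (ρ t) (V t) :=
      iInf_le (fun q : {p : (ℝ → TN d N → ℝ) × (ℝ → TN d N → Fin d → ℝ) //
          DiscCESol d N p.1 p.2 ∧ p.1 0 = ρ0 ∧ p.1 1 = ρ1} => ∫⁻ t in Icc (0:ℝ) 1,
          actionHarmN d N (q.1.1 t) (q.1.2 t))
        ⟨⟨ρ, V⟩, hsol, h0', h1'⟩
    refine hle.trans ?_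
    calc (∫⁻ t in Icc (0:ℝ) 1, actionHarmN d N (ρ t) (V t))
        ≤ ∫⁻ t in Icc (0:ℝ) 1, e⁻¹ * actionN d N (ρ t) (V t) := by
          apply lintegral_mono_ae
          filter_upwards [ae_restrict_mem measurableSet_Icc] with t ht
          exact action_compare d N hδ hN (hreg t ht) (V t)
    _ = e⁻¹ * ∫⁻ t in Icc (0:ℝ) 1, actionN d N (ρ t) (V t) :=
      lintegral_const_mul' _ _ heiT
  -- Step B: squared-distance comparison
  have main : WtildeNsq d N ρ0 ρ1 ≤ e⁻¹ * WNdeltaSq d N δ ρ0 ρ1 := by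
    have h1 : ∀ p : {p : (ℝ → TN d N → ℝ) × (ℝ → TN d N → Fin d → ℝ) //
        DiscCESol d N p.1 p.2 ∧ p.1 0 = ρ0 ∧ p.1 1 = ρ1 ∧
          ∀ t ∈ Icc (0:ℝ) 1, InDreg d N δ (p.1 t)}, e * WtildeNsq d N ρ0 ρ1 ≤
        ∫⁻ t in Icc (0:ℝ) 1, actionN d N (p.1.1 t) (p.1.2 t) := by
      intro p
      calc e * WtildeNsq d N ρ0 ρ1 ≤ e * (e⁻¹ * _) := mul_le_mul_right (stepA p) e
      _ = _ := by rw [← mul_assoc, ENNReal.mul_inv_cancel he0 heT, one_mul]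
    have h2 : e * WtildeNsq d N ρ0 ρ1 ≤ WNdeltaSq d N δ ρ0 ρ1 := le_iInf h1
    calc WtildeNsq d N ρ0 ρ1 = e⁻¹ * (e * WtildeNsq d N ρ0 ρ1) := by
          rw [← mul_assoc, ENNReal.inv_mul_cancel he0 heT, one_mul]
    _ ≤ e⁻¹ * WNdeltaSq d N δ ρ0 ρ1 := mul_le_mul_right h2 _
  -- Step C: take square roots
  rw [WtildeN, WNdelta]
  calc (WtildeNsq d N ρ0 ρ1) ^ (1/2 : ℝ)
      ≤ (e⁻¹ * WNdeltaSq d N δ ρ0 ρ1) ^ (1/2 : ℝ) :=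
        ENNReal.rpow_le_rpow main (by norm_num)
  _ = (e⁻¹) ^ (1/2 : ℝ) * (WNdeltaSq d N δ ρ0 ρ1) ^ (1/2 : ℝ) :=
        ENNReal.mul_rpow_of_nonneg _ _ (by norm_num)
  _ = ENNReal.ofReal ((1 - 1/(δ^4 * (N:ℝ)^2)) ^ (-(1/2) : ℝ)) *
        (WNdeltaSq d N δ ρ0 ρ1) ^ (1/2 : ℝ) := by
      congr 1
      rw [ENNReal.inv_rpow, ← ENNReal.rpow_neg, hedef,
        ENNReal.ofReal_rpow_of_pos hc0]


end GHConv
end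
end
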